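/- arXiv:1601.00090 — 9 statements merged into one kernel-verified Lean document; each statement's English description precedes it below -/
import Mathlib

section
/- Let λ₁, λ₂ ∈ ℂ with λ₁ ∉ ℝ and λ₂ ∉ ℝ. Then there exists a homeomorphism Φ of the closed unit ball B = {z ∈ ℂ² : |z| ≤ 1} onto itself with Φ(0) = 0 such that for all p = (p₁,p₂) and q = (q₁,q₂) in B \ {0}: (∃ t ∈ ℂ, q₁ = p₁·exp(λ₁·t) ∧ q₂ = p₂·exp(t)) if and only if (∃ s ∈ ℂ, (Φ q)₁ = (Φ p)₁·exp(λ₂·s) ∧ (Φ q)₂ = (Φ p)₂·exp(s)). In other words, Φ maps the trace in B of each leaf of the holomorphic foliation given by λ₁x ∂/∂x + y ∂/∂y onto the trace in B of a leaf of the foliation given by λ₂x ∂/∂x + y ∂/∂y, so the two foliation germs are topologically equivalent. -/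
/-!
For `0 < re A` the map `x ↦ x |x|^(A-1)` is a homeomorphism of `ℂ` which, in logarithmic
coordinates `x = exp z`, is the `ℝ`-linear map `z ↦ z + (A - 1) re z`. When `im λ₁` and `im λ₂`
have the same sign, `A` and `B` can be chosen so that `(x, y) ↦ (x |x|^(A-1), y |y|^(B-1))` maps
the leaves of `λ₁` onto those of `λ₂`; otherwise first apply complex conjugation, which turns
`λ₁` into `conj λ₁`.

This homeomorphism `Ψ` of `ℂ²` does not preserve the unit ball, so `Ψ z` is then slid along its
`λ₂`-leaf by a real flow which multiplies norms by `exp r`, until it has norm `‖z‖`. The result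
is again bijective because, along the `Ψ`-preimage of an orbit of that flow, the squared norm is
`α exp (p r) + β exp (q r)` with `p, q > 0`, which takes each positive value exactly once.
-/

open Complex ComplexConjugate Filter Topology

local notation "ℂ²" => EuclideanSpace ℂ (Fin 2)

noncomputable section

theorem existsUnique_mul_exp_add_mul_exp_eq {α β p q c : ℝ} (hα : 0 ≤ α) (hβ : 0 ≤ β)
    (hαβ : 0 < α + β) (hp : 0 < p) (hq : 0 < q) (hc : 0 < c) :
    ∃! r : ℝ, α * Real.exp (p * r) + β * Real.exp (q * r) = c := by
  set f : ℝ → ℝ := fun r => α * Real.exp (p * r) + β * Real.exp (q * r) with hf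
  have hmono : StrictMono f := by
    intro x y hxy
    have h₁ := Real.exp_lt_exp.2 (mul_lt_mul_of_pos_left hxy hp)
    have h₂ := Real.exp_lt_exp.2 (mul_lt_mul_of_pos_left hxy hq)
    rcases hα.eq_or_lt with rfl | hα'
    · simp only [hf]; nlinarith
    · simp only [hf]; nlinarith
  have hbot : Tendsto f atBot (𝓝 0) := by
    have h := ((Real.tendsto_exp_atBot.comp (tendsto_id.const_mul_atBot hp)).const_mul α).add
      ((Real.tendsto_exp_atBot.comp (tendsto_id.const_mul_atBot hq)).const_mul β)
    simpa using h
  obtain ⟨a, ha⟩ := (hbot.eventually (ge_mem_nhds hc)).exists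
  have hb : c ≤ f (c / (α * p + β * q)) := by
    have hpos : 0 < α * p + β * q := by rcases hα.eq_or_lt with rfl | hα' <;> nlinarith
    set b := c / (α * p + β * q) with hb
    have hbc : b * (α * p + β * q) = c := div_mul_cancel₀ c hpos.ne'
    have h₁ := Real.add_one_le_exp (p * b)
    have h₂ := Real.add_one_le_exp (q * b)
    simp only [hf]
    nlinarith [mul_le_mul_of_nonneg_left h₁ hα, mul_le_mul_of_nonneg_left h₂ hβ]
  obtain ⟨r, hr⟩ := mem_range_of_exists_le_of_exists_ge (by fun_prop) ⟨a, ha⟩ ⟨_, hb⟩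
  exact ⟨r, hr, fun s hs => hmono.injective (hs.trans hr.symm)⟩

def closedBallHomeomorphOfNormEq {E : Type*} [NormedAddCommGroup E] [ProperSpace E] {f : E → E}
    (hf : Continuous f) (hbij : Function.Bijective f) (hnorm : ∀ x, ‖f x‖ = ‖x‖) (r : ℝ) :
    Metric.closedBall (0 : E) r ≃ₜ Metric.closedBall (0 : E) r :=
  have : CompactSpace (Metric.closedBall (0 : E) r) :=
    isCompact_iff_compactSpace.1 (isCompact_closedBall 0 r)
  Continuous.homeoOfEquivCompactToT2
    (f := (Equiv.ofBijective f hbij).subtypeEquiv fun x => by simp [hnorm])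
    ((hf.comp continuous_subtype_val).subtype_mk _)

theorem ext_fin_two {v w : ℂ²} (h₀ : v 0 = w 0) (h₁ : v 1 = w 1) : v = w := by
  ext i; fin_cases i <;> assumption

theorem norm_sq_eq_fin_two (w : ℂ²) : ‖w‖ ^ 2 = ‖w 0‖ ^ 2 + ‖w 1‖ ^ 2 := by
  simp [EuclideanSpace.norm_sq_eq, Fin.sum_univ_two]

def leafMap (l s : ℂ) (w : ℂ²) : ℂ² := !₂[w 0 * exp (l * s), w 1 * exp s]

@[simp] theorem leafMap_apply_zero (l s : ℂ) (w : ℂ²) : leafMap l s w 0 = w 0 * exp (l * s) := rfl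

@[simp] theorem leafMap_apply_one (l s : ℂ) (w : ℂ²) : leafMap l s w 1 = w 1 * exp s := rfl

def SameLeaf (l : ℂ) (p q : ℂ²) : Prop :=
  ∃ t : ℂ, q 0 = p 0 * exp (l * t) ∧ q 1 = p 1 * exp t

theorem sameLeaf_iff {l : ℂ} {p q : ℂ²} : SameLeaf l p q ↔ ∃ t, q = leafMap l t p :=
  exists_congr fun t =>
    ⟨fun ⟨h₀, h₁⟩ => ext_fin_two h₀ h₁, fun h => ⟨by rw [h]; rfl, by rw [h]; rfl⟩⟩

theorem leafMap_zero_right (l s : ℂ) : leafMap l s 0 = 0 :=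
  ext_fin_two (by simp) (by simp)

theorem leafMap_leafMap (l s t : ℂ) (w : ℂ²) :
    leafMap l s (leafMap l t w) = leafMap l (t + s) w :=
  ext_fin_two (by simp [mul_add, exp_add, mul_assoc]) (by simp [exp_add, mul_assoc])

theorem leafMap_zero (l : ℂ) (w : ℂ²) : leafMap l 0 w = w :=
  ext_fin_two (by simp) (by simp)

theorem leafMap_neg_leafMap (l s : ℂ) (w : ℂ²) : leafMap l (-s) (leafMap l s w) = w := by
  rw [leafMap_leafMap, add_neg_cancel, leafMap_zero]

theorem sameLeaf_leafMap_left {l s : ℂ} {p q : ℂ²} :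
    SameLeaf l (leafMap l s p) q ↔ SameLeaf l p q := by
  simp only [sameLeaf_iff, leafMap_leafMap]
  exact ⟨fun ⟨t, h⟩ => ⟨s + t, h⟩, fun ⟨t, h⟩ => ⟨t - s, by rw [h, add_sub_cancel]⟩⟩

theorem sameLeaf_leafMap_right {l s : ℂ} {p q : ℂ²} :
    SameLeaf l p (leafMap l s q) ↔ SameLeaf l p q := by
  simp only [sameLeaf_iff]
  refine ⟨fun ⟨t, h⟩ => ⟨t - s, ?_⟩, fun ⟨t, h⟩ => ⟨t + s, by rw [h, leafMap_leafMap]⟩⟩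
  rw [← leafMap_neg_leafMap l s q, h, leafMap_leafMap, sub_eq_add_neg]

theorem continuous_leafMap (l : ℂ) : Continuous fun x : ℂ × ℂ² => leafMap l x.1 x.2 := by
  unfold leafMap
  fun_prop

/-- Both `radialDir l` and `l * radialDir l` have real part `1`, so the real flow
`r ↦ leafMap l (radialDir l * r)` along the leaves multiplies both moduli by `exp r`. -/
def radialDir (l : ℂ) : ℂ := 1 + ((l.re - 1) / l.im : ℝ) * I

theorem re_mul_radialDir {l : ℂ} (hl : l.im ≠ 0) (r : ℝ) : (l * (radialDir l * r)).re = r := by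
  rw [← mul_assoc, re_mul_ofReal, radialDir, mul_add, mul_one, add_re, ← mul_assoc, mul_I_re,
    im_mul_ofReal]
  field_simp; ring

theorem re_radialDir_mul (l : ℂ) (r : ℝ) : (radialDir l * r).re = r := by simp [radialDir]

theorem norm_leafMap_radialDir {l : ℂ} (hl : l.im ≠ 0) (r : ℝ) (w : ℂ²) :
    ‖leafMap l (radialDir l * r) w‖ = Real.exp r * ‖w‖ := by
  refine (pow_left_inj₀ (norm_nonneg _) (by positivity) two_ne_zero).1 ?_
  rw [norm_sq_eq_fin_two, mul_pow, norm_sq_eq_fin_two]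
  simp only [leafMap_apply_zero, leafMap_apply_one, norm_mul, norm_exp, re_mul_radialDir hl,
    re_radialDir_mul]
  ring

/-- The last field says that the `Ψ`-preimage of every nonzero orbit of the radial flow of `l₂`
crosses each sphere about `0` exactly once. -/
structure IsRadialLeafConjugacy (l₁ l₂ : ℂ) (Ψ : ℂ² ≃ₜ ℂ²) : Prop where
  map_zero : Ψ 0 = 0
  sameLeaf_iff : ∀ p q, SameLeaf l₁ p q ↔ SameLeaf l₂ (Ψ p) (Ψ q)
  existsUnique_norm_symm :
    ∀ w ≠ 0, ∀ ρ > 0, ∃! r : ℝ, ‖Ψ.symm (leafMap l₂ (radialDir l₂ * r) w)‖ = ρ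

/-- `Ψ z` pushed along its leaf to norm `‖z‖`. At `z = 0` the junk value of `Real.log 0` is
harmless, as `leafMap l s 0 = 0`. -/
def normalizeAlongLeaf (l : ℂ) (Ψ : ℂ² → ℂ²) (z : ℂ²) : ℂ² :=
  leafMap l (radialDir l * (Real.log ‖z‖ - Real.log ‖Ψ z‖ : ℝ)) (Ψ z)

namespace IsRadialLeafConjugacy

variable {l₁ l₂ : ℂ} {Ψ : ℂ² ≃ₜ ℂ²}

theorem normalizeAlongLeaf_zero (hΨ : IsRadialLeafConjugacy l₁ l₂ Ψ) :
    normalizeAlongLeaf l₂ Ψ 0 = 0 := by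
  rw [normalizeAlongLeaf, hΨ.map_zero, leafMap_zero_right]

theorem apply_ne_zero (hΨ : IsRadialLeafConjugacy l₁ l₂ Ψ) {z : ℂ²} (hz : z ≠ 0) : Ψ z ≠ 0 :=
  hΨ.map_zero ▸ Ψ.injective.ne hz

theorem norm_normalizeAlongLeaf (hΨ : IsRadialLeafConjugacy l₁ l₂ Ψ) (hl₂ : l₂.im ≠ 0)
    (z : ℂ²) : ‖normalizeAlongLeaf l₂ Ψ z‖ = ‖z‖ := by
  rcases eq_or_ne z 0 with rfl | hz
  · rw [hΨ.normalizeAlongLeaf_zero]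
  · have hΨz := norm_pos_iff.2 (hΨ.apply_ne_zero hz)
    rw [normalizeAlongLeaf, norm_leafMap_radialDir hl₂, Real.exp_sub,
      Real.exp_log (norm_pos_iff.2 hz), Real.exp_log hΨz]
    field_simp

theorem continuous_normalizeAlongLeaf (hΨ : IsRadialLeafConjugacy l₁ l₂ Ψ) (hl₂ : l₂.im ≠ 0) :
    Continuous (normalizeAlongLeaf l₂ Ψ) := by
  refine continuous_iff_continuousAt.2 fun z => ?_
  rcases eq_or_ne z 0 with rfl | hz
  · rw [ContinuousAt, hΨ.normalizeAlongLeaf_zero, tendsto_zero_iff_norm_tendsto_zero]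
    simpa [hΨ.norm_normalizeAlongLeaf hl₂] using continuous_norm.tendsto (0 : ℂ²)
  · have hz' : ‖z‖ ≠ 0 := norm_ne_zero_iff.2 hz
    have hΨz : ‖Ψ z‖ ≠ 0 := norm_ne_zero_iff.2 (hΨ.apply_ne_zero hz)
    refine (continuous_leafMap l₂).continuousAt.comp
      (f := fun z => (radialDir l₂ * (Real.log ‖z‖ - Real.log ‖Ψ z‖ : ℝ), Ψ z)) ?_
    fun_prop (disch := assumption)

theorem sameLeaf_normalizeAlongLeaf_iff (hΨ : IsRadialLeafConjugacy l₁ l₂ Ψ) (p q : ℂ²) :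
    SameLeaf l₁ p q ↔ SameLeaf l₂ (normalizeAlongLeaf l₂ Ψ p) (normalizeAlongLeaf l₂ Ψ q) := by
  rw [hΨ.sameLeaf_iff, normalizeAlongLeaf, normalizeAlongLeaf, sameLeaf_leafMap_left,
    sameLeaf_leafMap_right]

theorem normalizeAlongLeaf_eq_iff (hΨ : IsRadialLeafConjugacy l₁ l₂ Ψ) (hl₂ : l₂.im ≠ 0)
    {z W : ℂ²} (hW : W ≠ 0) :
    normalizeAlongLeaf l₂ Ψ z = W ↔ ‖z‖ = ‖W‖ ∧ ∃ r : ℝ, Ψ z = leafMap l₂ (radialDir l₂ * r) W := by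
  constructor
  · rintro rfl
    refine ⟨(hΨ.norm_normalizeAlongLeaf hl₂ z).symm, -(Real.log ‖z‖ - Real.log ‖Ψ z‖), ?_⟩
    rw [normalizeAlongLeaf, leafMap_leafMap, ofReal_neg, mul_neg, add_neg_cancel, leafMap_zero]
  · rintro ⟨hn, r, hr⟩
    have hlog : Real.log ‖z‖ - Real.log ‖Ψ z‖ = -r := by
      rw [hn, hr, norm_leafMap_radialDir hl₂, Real.log_mul (Real.exp_ne_zero r)
        (norm_ne_zero_iff.2 hW), Real.log_exp]
      ring
    rw [normalizeAlongLeaf, hlog, hr, leafMap_leafMap, ofReal_neg, mul_neg, add_neg_cancel,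
      leafMap_zero]

theorem bijective_normalizeAlongLeaf (hΨ : IsRadialLeafConjugacy l₁ l₂ Ψ) (hl₂ : l₂.im ≠ 0) :
    Function.Bijective (normalizeAlongLeaf l₂ Ψ) := by
  refine (Function.bijective_iff_existsUnique _).2 fun W => ?_
  rcases eq_or_ne W 0 with rfl | hW
  · refine ⟨0, hΨ.normalizeAlongLeaf_zero, fun z hz => ?_⟩
    rw [← norm_eq_zero, ← hΨ.norm_normalizeAlongLeaf hl₂, hz, norm_zero]
  · obtain ⟨r, hr, huniq⟩ := hΨ.existsUnique_norm_symm W hW ‖W‖ (norm_pos_iff.2 hW)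
    refine ⟨_, (hΨ.normalizeAlongLeaf_eq_iff hl₂ hW).2 ⟨hr, r, Ψ.apply_symm_apply _⟩,
      fun z hz => ?_⟩
    obtain ⟨hn, r', hr'⟩ := (hΨ.normalizeAlongLeaf_eq_iff hl₂ hW).1 hz
    rw [Ψ.eq_symm_apply.2 hr'] at hn ⊢
    rw [huniq r' hn]

end IsRadialLeafConjugacy

def twist (A z : ℂ) : ℂ := z + (A - 1) * z.re

theorem twist_re (A z : ℂ) : (twist A z).re = A.re * z.re := by
  rw [twist, add_re, re_mul_ofReal, sub_re, one_re]; ring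

theorem twist_add (A z w : ℂ) : twist A (z + w) = twist A z + twist A w := by
  simp only [twist, add_re, ofReal_add]; ring

theorem twist_twist {A A' : ℂ} (h : A' - 1 + (A - 1) * A'.re = 0) (z : ℂ) :
    twist A (twist A' z) = z := by
  rw [twist, twist_re, twist]; push_cast
  linear_combination (z.re : ℂ) * h

def twistInv (A : ℂ) : ℂ := 1 - (A - 1) / A.re

theorem twistInv_re {A : ℂ} (hA : A.re ≠ 0) : (twistInv A).re = A.re⁻¹ := by
  simp only [twistInv, sub_re, one_re, div_ofReal_re]
  field_simp; ring

theorem twistInv_re_pos {A : ℂ} (hA : 0 < A.re) : 0 < (twistInv A).re := by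
  rw [twistInv_re hA.ne']; positivity

theorem twist_twistInv {A : ℂ} (hA : A.re ≠ 0) (z : ℂ) : twist A (twist (twistInv A) z) = z := by
  refine twist_twist ?_ z
  rw [twistInv_re hA, twistInv]; push_cast
  field_simp; ring

theorem twistInv_twist {A : ℂ} (hA : A.re ≠ 0) (z : ℂ) : twist (twistInv A) (twist A z) = z := by
  refine twist_twist ?_ z
  have : (A.re : ℂ) ≠ 0 := ofReal_ne_zero.2 hA
  rw [twistInv]; field_simp; ring

def twistPow (A x : ℂ) : ℂ := x * exp ((A - 1) * Real.log ‖x‖)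

theorem twistPow_exp (A z : ℂ) : twistPow A (exp z) = exp (twist A z) := by
  rw [twistPow, norm_exp, Real.log_exp, twist, exp_add]

theorem twistPow_eq_zero_iff {A x : ℂ} : twistPow A x = 0 ↔ x = 0 := by
  simp [twistPow, exp_ne_zero]

theorem twistPow_mul_exp (A x w : ℂ) : twistPow A (x * exp w) = twistPow A x * exp (twist A w) := by
  rcases eq_or_ne x 0 with rfl | hx
  · simp [twistPow]
  · rw [← exp_log hx, ← exp_add, twistPow_exp, twistPow_exp, twist_add, exp_add]

theorem twistPow_twistPow {A A' : ℂ} (h : ∀ z, twist A (twist A' z) = z) (x : ℂ) :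
    twistPow A (twistPow A' x) = x := by
  rcases eq_or_ne x 0 with rfl | hx
  · simp [twistPow]
  · rw [← exp_log hx, twistPow_exp, twistPow_exp, h]

theorem norm_twistPow {A : ℂ} (hA : 0 < A.re) (x : ℂ) : ‖twistPow A x‖ = ‖x‖ ^ A.re := by
  rcases eq_or_ne x 0 with rfl | hx
  · simp [twistPow, Real.zero_rpow hA.ne']
  · rw [← exp_log hx, twistPow_exp, norm_exp, norm_exp, twist_re, ← Real.exp_mul, mul_comm]

theorem continuous_twistPow {A : ℂ} (hA : 0 < A.re) : Continuous (twistPow A) := by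
  refine continuous_iff_continuousAt.2 fun x => ?_
  rcases eq_or_ne x 0 with rfl | hx
  · have h : Tendsto (fun x : ℂ => ‖x‖ ^ A.re) (𝓝 0) (𝓝 0) := by
      simpa [Real.zero_rpow hA.ne'] using
        ((continuous_norm.rpow_const fun _ => Or.inr hA.le).tendsto (0 : ℂ))
    simpa [ContinuousAt, twistPow] using squeeze_zero_norm (fun x => (norm_twistPow hA x).le) h
  · unfold twistPow
    have : ‖x‖ ≠ 0 := norm_ne_zero_iff.2 hx
    fun_prop (disch := assumption)

def diagTwist (A B : ℂ) (z : ℂ²) : ℂ² := !₂[twistPow A (z 0), twistPow B (z 1)]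

theorem diagTwist_eq_zero_iff {A B : ℂ} {z : ℂ²} : diagTwist A B z = 0 ↔ z = 0 := by
  refine ⟨fun h => ext_fin_two ?_ ?_, fun h => ext_fin_two ?_ ?_⟩
  · exact twistPow_eq_zero_iff.1 (congrArg (· 0) h)
  · exact twistPow_eq_zero_iff.1 (congrArg (· 1) h)
  · exact twistPow_eq_zero_iff.2 (congrArg (· 0) h)
  · exact twistPow_eq_zero_iff.2 (congrArg (· 1) h)

theorem diagTwist_leafMap (A B l s : ℂ) (w : ℂ²) :
    diagTwist A B (leafMap l s w) =
      !₂[diagTwist A B w 0 * exp (twist A (l * s)), diagTwist A B w 1 * exp (twist B s)] := by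
  simp only [diagTwist, leafMap_apply_zero, leafMap_apply_one, twistPow_mul_exp]
  rfl

def diagTwistHomeomorph {A B : ℂ} (hA : 0 < A.re) (hB : 0 < B.re) : ℂ² ≃ₜ ℂ² where
  toFun := diagTwist A B
  invFun := diagTwist (twistInv A) (twistInv B)
  left_inv z := ext_fin_two (twistPow_twistPow (twistInv_twist hA.ne') _)
    (twistPow_twistPow (twistInv_twist hB.ne') _)
  right_inv z := ext_fin_two (twistPow_twistPow (twist_twistInv hA.ne') _)
    (twistPow_twistPow (twist_twistInv hB.ne') _)
  continuous_toFun := by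
    have := continuous_twistPow hA
    have := continuous_twistPow hB
    unfold diagTwist; fun_prop
  continuous_invFun := by
    have := continuous_twistPow (twistInv_re_pos hA)
    have := continuous_twistPow (twistInv_re_pos hB)
    unfold diagTwist; fun_prop

@[simp] theorem diagTwistHomeomorph_apply {A B : ℂ} (hA : 0 < A.re) (hB : 0 < B.re) (z : ℂ²) :
    diagTwistHomeomorph hA hB z = diagTwist A B z :=
  rfl

@[simp] theorem diagTwistHomeomorph_symm_apply {A B : ℂ} (hA : 0 < A.re) (hB : 0 < B.re)
    (z : ℂ²) : (diagTwistHomeomorph hA hB).symm z = diagTwist (twistInv A) (twistInv B) z :=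
  rfl

theorem existsUnique_norm_diagTwist_leafMap {A B l : ℂ} (hA : 0 < A.re) (hB : 0 < B.re)
    (hl : l.im ≠ 0) {w : ℂ²} (hw : w ≠ 0) {ρ : ℝ} (hρ : 0 < ρ) :
    ∃! r : ℝ, ‖diagTwist A B (leafMap l (radialDir l * r) w)‖ = ρ := by
  have hsq : ∀ r : ℝ, ‖diagTwist A B (leafMap l (radialDir l * r) w)‖ ^ 2 =
      ‖diagTwist A B w 0‖ ^ 2 * Real.exp (2 * A.re * r) +
        ‖diagTwist A B w 1‖ ^ 2 * Real.exp (2 * B.re * r) := by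
    intro r
    rw [diagTwist_leafMap, norm_sq_eq_fin_two]
    simp only [Matrix.cons_val_zero, Matrix.cons_val_one, norm_mul, norm_exp,
      twist_re, re_mul_radialDir hl, re_radialDir_mul, mul_pow, ← Real.exp_nat_mul]
    ring_nf
  have hpos : 0 < ‖diagTwist A B w 0‖ ^ 2 + ‖diagTwist A B w 1‖ ^ 2 := by
    rw [← norm_sq_eq_fin_two]
    exact pow_pos (norm_pos_iff.2 (diagTwist_eq_zero_iff.not.2 hw)) 2
  refine (existsUnique_congr fun r => ?_).2 (existsUnique_mul_exp_add_mul_exp_eq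
    (p := 2 * A.re) (q := 2 * B.re) (by positivity) (by positivity) hpos (by positivity)
    (by positivity) (pow_pos hρ 2))
  rw [← hsq, pow_left_inj₀ (norm_nonneg _) hρ.le two_ne_zero]

theorem isRadialLeafConjugacy_diagTwistHomeomorph {l₁ l₂ A B : ℂ} (hl₂ : l₂.im ≠ 0)
    (hA : 0 < A.re) (hB : 0 < B.re) (hAB : ∀ t, twist A (l₁ * t) = l₂ * twist B t) :
    IsRadialLeafConjugacy l₁ l₂ (diagTwistHomeomorph hA hB) where
  map_zero := diagTwist_eq_zero_iff.2 rfl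
  sameLeaf_iff p q := by
    have key : ∀ t z, diagTwist A B (leafMap l₁ t z) = leafMap l₂ (twist B t) (diagTwist A B z) :=
      fun t z => by rw [diagTwist_leafMap, hAB]; rfl
    simp only [sameLeaf_iff, diagTwistHomeomorph_apply]
    refine ⟨fun ⟨t, h⟩ => ⟨twist B t, h ▸ key t p⟩, fun ⟨s, h⟩ => ⟨twist (twistInv B) s, ?_⟩⟩
    exact (diagTwistHomeomorph hA hB).injective (by simp [h, key, twist_twistInv hB.ne'])
  existsUnique_norm_symm _ hw _ hρ := by
    simpa using existsUnique_norm_diagTwist_leafMap (twistInv_re_pos hA) (twistInv_re_pos hB)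
      hl₂ hw hρ

theorem exists_twist_mul_eq {l₁ l₂ : ℂ} (h : 0 < l₁.im * l₂.im) :
    ∃ A B : ℂ, 0 < A.re ∧ 0 < B.re ∧ ∀ t, twist A (l₁ * t) = l₂ * twist B t := by
  have h₁ : l₁.im ≠ 0 := left_ne_zero_of_mul h.ne'
  have h₂ : l₂.im ≠ 0 := right_ne_zero_of_mul h.ne'
  have hl₁ : l₁ ≠ 0 := fun h => h₁ (by simp [h])
  have hl₂ : l₂ ≠ 0 := fun h => h₂ (by simp [h])
  have h₁' : (l₁.im : ℂ) ≠ 0 := ofReal_ne_zero.2 h₁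
  -- The identity is `ℝ`-linear in `t`: at `t = I` it forces `A`, and then at `t = 1` it forces `B`.
  set A := 1 + I * (l₁ - l₂) / l₁.im with hA
  set B := twist A l₁ / l₂ with hB
  have hAre : A.re = l₁.im * l₂.im / l₁.im ^ 2 := by
    rw [hA, add_re, one_re, div_ofReal_re, I_mul_re, sub_im]
    field_simp; ring
  have hBre : B.re = A.re * normSq l₁ / normSq l₂ := by
    rw [hB, div_re, hAre]
    simp only [twist, hA, add_sub_cancel_left, add_re, mul_re, div_ofReal_re, I_re, sub_re,
      zero_mul, I_im, sub_im, one_mul, zero_sub, neg_sub, ofReal_re, div_ofReal_im, mul_im,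
      zero_add, ofReal_im, mul_zero, sub_zero, normSq_apply, add_im]
    field_simp
    ring
  refine ⟨A, B, hAre ▸ by positivity, ?_, fun t => ?_⟩
  · rw [hBre]
    have : 0 < A.re := hAre ▸ by positivity
    have := normSq_pos.2 hl₁
    have := normSq_pos.2 hl₂
    positivity
  · have hAI : (l₁.im : ℂ) * (A - 1) = I * (l₁ - l₂) := by
      rw [hA]; field_simp; ring
    have hBl : l₂ * B = twist A l₁ := by rw [hB]; field_simp
    have ht : t = t.re + t.im * I := (re_add_im t).symm
    simp only [twist, mul_re] at hBl ⊢
    push_cast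
    linear_combination (l₁ - l₂) * ht - (t.re : ℂ) * hBl - (t.im : ℂ) * hAI

def conjCoords : ℂ² ≃ₗᵢ[ℝ] ℂ² := LinearIsometryEquiv.piLpCongrRight 2 fun _ => conjLIE

@[simp] theorem conjCoords_apply (z : ℂ²) (i : Fin 2) : conjCoords z i = conj (z i) := rfl

theorem conjCoords_leafMap (l t : ℂ) (z : ℂ²) :
    conjCoords (leafMap l t z) = leafMap (conj l) (conj t) (conjCoords z) :=
  ext_fin_two (by simp [← exp_conj]) (by simp [← exp_conj])

theorem sameLeaf_conjCoords_iff {l : ℂ} {p q : ℂ²} :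
    SameLeaf (conj l) (conjCoords p) (conjCoords q) ↔ SameLeaf l p q := by
  simp only [sameLeaf_iff]
  refine ⟨fun ⟨s, h⟩ => ⟨conj s, conjCoords.injective ?_⟩, fun ⟨t, h⟩ => ⟨conj t, ?_⟩⟩
  · rw [h, conjCoords_leafMap, conj_conj]
  · rw [h, conjCoords_leafMap]

theorem IsRadialLeafConjugacy.conjCoords_trans {l₁ l₂ : ℂ} {Ψ : ℂ² ≃ₜ ℂ²}
    (hΨ : IsRadialLeafConjugacy (conj l₁) l₂ Ψ) :
    IsRadialLeafConjugacy l₁ l₂ (conjCoords.toHomeomorph.trans Ψ) where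
  map_zero := by simp [hΨ.map_zero]
  sameLeaf_iff p q := by
    rw [← sameLeaf_conjCoords_iff, hΨ.sameLeaf_iff]; rfl
  existsUnique_norm_symm w hw ρ hρ := by
    simpa using hΨ.existsUnique_norm_symm w hw ρ hρ

theorem exists_isRadialLeafConjugacy {l₁ l₂ : ℂ} (h₁ : l₁.im ≠ 0) (h₂ : l₂.im ≠ 0) :
    ∃ Ψ, IsRadialLeafConjugacy l₁ l₂ Ψ := by
  have of_pos : ∀ {l : ℂ}, 0 < l.im * l₂.im → ∃ Ψ, IsRadialLeafConjugacy l l₂ Ψ := fun h => by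
    obtain ⟨A, B, hA, hB, hAB⟩ := exists_twist_mul_eq h
    exact ⟨_, isRadialLeafConjugacy_diagTwistHomeomorph h₂ hA hB hAB⟩
  rcases (mul_ne_zero h₁ h₂).lt_or_gt with h | h
  · obtain ⟨Ψ, hΨ⟩ := of_pos (l := conj l₁) (by rw [conj_im]; linarith)
    exact ⟨_, hΨ.conjCoords_trans⟩
  · exact of_pos h

end

/-- For λ₁, λ₂ ∈ ℂ \ ℝ, the holomorphic foliation germs given by
λ₁x ∂/∂x + y ∂/∂y and λ₂x ∂/∂x + y ∂/∂y are topologically equivalent: there is a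
homeomorphism Φ of the closed unit ball of ℂ² onto itself fixing 0 which maps leaf
traces onto leaf traces. -/
theorem stmt0 (l₁ l₂ : ℂ) (h₁ : l₁.im ≠ 0) (h₂ : l₂.im ≠ 0) :
    ∃ Φ : (Metric.closedBall (0 : EuclideanSpace ℂ (Fin 2)) 1 : Set (EuclideanSpace ℂ (Fin 2))) ≃ₜ
          (Metric.closedBall (0 : EuclideanSpace ℂ (Fin 2)) 1 : Set (EuclideanSpace ℂ (Fin 2))),
      ((Φ ⟨0, Metric.mem_closedBall_self zero_le_one⟩ : EuclideanSpace ℂ (Fin 2)) = 0) ∧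
      ∀ p q : (Metric.closedBall (0 : EuclideanSpace ℂ (Fin 2)) 1 : Set (EuclideanSpace ℂ (Fin 2))),
        (p : EuclideanSpace ℂ (Fin 2)) ≠ 0 → (q : EuclideanSpace ℂ (Fin 2)) ≠ 0 →
        ((∃ t : ℂ,
            (q : EuclideanSpace ℂ (Fin 2)) 0 = (p : EuclideanSpace ℂ (Fin 2)) 0 * Complex.exp (l₁ * t) ∧
            (q : EuclideanSpace ℂ (Fin 2)) 1 = (p : EuclideanSpace ℂ (Fin 2)) 1 * Complex.exp t) ↔
         (∃ s : ℂ,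
            (Φ q : EuclideanSpace ℂ (Fin 2)) 0 = (Φ p : EuclideanSpace ℂ (Fin 2)) 0 * Complex.exp (l₂ * s) ∧
            (Φ q : EuclideanSpace ℂ (Fin 2)) 1 = (Φ p : EuclideanSpace ℂ (Fin 2)) 1 * Complex.exp s)) := by
  obtain ⟨Ψ, hΨ⟩ := exists_isRadialLeafConjugacy h₁ h₂
  exact ⟨closedBallHomeomorphOfNormEq (hΨ.continuous_normalizeAlongLeaf h₂)
      (hΨ.bijective_normalizeAlongLeaf h₂) (hΨ.norm_normalizeAlongLeaf h₂) 1,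
    hΨ.normalizeAlongLeaf_zero, fun p q _ _ => hΨ.sameLeaf_normalizeAlongLeaf_iff p q⟩
end

section
/- Let T² = (ℝ/2πℤ) × (ℝ/2πℤ) be the 2-dimensional torus. Let λ ∈ ℝ, let a, b, c, d ∈ ℤ with a·d − b·c = 1 or a·d − b·c = −1, assume c·λ + d ≠ 0, and set μ = (a·λ + b)/(c·λ + d). Then the map φ : T² → T² induced by (x,y) ↦ (a·x + b·y, c·x + d·y) is a well-defined homeomorphism, and for every point P ∈ T², φ maps the orbit {t ·_λ P : t ∈ ℝ} onto the orbit {s ·_μ φ(P) : s ∈ ℝ}; in fact φ(t ·_λ P) = ((c·λ + d)·t) ·_μ φ(P) for all t ∈ ℝ. Hence the Kronecker foliations F_λ and F_μ on T² are topologically equivalent. -/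
/-! The integer matrix `A = !![a, b; c, d]` acts additively on `G × G` for any abelian group `G`,
and `A` composed with its adjugate either way is multiplication by `det A`. If `det A = ±1`, then
`(det A) • adj A` inverts `A`, so `A` is a homeomorphism of the torus. By additivity,
`A (P + (λt, t)) = A P + (aλt + bt, cλt + dt)`, and `aλ + b = μ (cλ + d)`. So `A` carries the
`λ`-flow to the `μ`-flow, reparametrised by `t ↦ (cλ + d) t`, which is a bijection of `ℝ`
because `cλ + d ≠ 0`. -/

section IntMatrixAction

variable {G : Type*} [AddCommGroup G]

def intMatrixProdHom (a b c d : ℤ) : G × G →+ G × G :=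
  (a • AddMonoidHom.fst G G + b • AddMonoidHom.snd G G).prod
    (c • AddMonoidHom.fst G G + d • AddMonoidHom.snd G G)

@[simp]
lemma intMatrixProdHom_apply (a b c d : ℤ) (P : G × G) :
    intMatrixProdHom a b c d P = (a • P.1 + b • P.2, c • P.1 + d • P.2) :=
  rfl

lemma intMatrixProdHom_adjugate_apply_intMatrixProdHom (a b c d : ℤ) (P : G × G) :
    intMatrixProdHom d (-b) (-c) a (intMatrixProdHom a b c d P) = (a * d - b * c) • P := by
  ext <;> simp only [intMatrixProdHom_apply, smul_add, smul_smul, Prod.smul_fst, Prod.smul_snd] <;>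
    module

lemma intMatrixProdHom_apply_intMatrixProdHom_adjugate (a b c d : ℤ) (P : G × G) :
    intMatrixProdHom a b c d (intMatrixProdHom d (-b) (-c) a P) = (a * d - b * c) • P := by
  ext <;> simp only [intMatrixProdHom_apply, smul_add, smul_smul, Prod.smul_fst, Prod.smul_snd] <;>
    module

variable [TopologicalSpace G] [IsTopologicalAddGroup G]

lemma continuous_intMatrixProdHom (a b c d : ℤ) :
    Continuous (intMatrixProdHom a b c d : G × G → G × G) := by
  show Continuous fun P : G × G => (a • P.1 + b • P.2, c • P.1 + d • P.2)
  fun_prop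

def intMatrixProdHomeomorph {a b c d : ℤ} (h : IsUnit (a * d - b * c)) : G × G ≃ₜ G × G where
  toFun := intMatrixProdHom a b c d
  invFun P := intMatrixProdHom d (-b) (-c) a ((a * d - b * c) • P)
  left_inv P := by
    dsimp only
    rw [map_zsmul, intMatrixProdHom_adjugate_apply_intMatrixProdHom, smul_smul,
      Int.isUnit_mul_self h, one_smul]
  right_inv P := by
    dsimp only
    rw [intMatrixProdHom_apply_intMatrixProdHom_adjugate, smul_smul, Int.isUnit_mul_self h,
      one_smul]
  continuous_toFun := continuous_intMatrixProdHom a b c d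
  continuous_invFun := (continuous_intMatrixProdHom _ _ _ _).comp (continuous_const_smul _)

end IntMatrixAction

section KroneckerFlow

variable (p : ℝ)

/-- `t ·_λ P` in the notation of the statement. -/
def kroneckerFlow (lam t : ℝ) (P : AddCircle p × AddCircle p) : AddCircle p × AddCircle p :=
  (P.1 + ((lam * t : ℝ) : AddCircle p), P.2 + ((t : ℝ) : AddCircle p))

def kroneckerOrbit (lam : ℝ) (P : AddCircle p × AddCircle p) : Set (AddCircle p × AddCircle p) :=
  {Q | ∃ t : ℝ, Q = kroneckerFlow p lam t P}

variable {p}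

lemma intMatrixProdHom_coe (a b c d : ℤ) (x y : ℝ) :
    intMatrixProdHom a b c d ((x : AddCircle p), (y : AddCircle p)) =
      (((a * x + b * y : ℝ) : AddCircle p), ((c * x + d * y : ℝ) : AddCircle p)) := by
  simp only [intMatrixProdHom_apply, AddCircle.coe_add, ← zsmul_eq_mul, AddCircle.coe_zsmul]

lemma intMatrixProdHom_kroneckerFlow {lam : ℝ} {a b c d : ℤ} (hc : (c : ℝ) * lam + d ≠ 0)
    (P : AddCircle p × AddCircle p) (t : ℝ) :
    intMatrixProdHom a b c d (kroneckerFlow p lam t P) =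
      kroneckerFlow p ((a * lam + b) / (c * lam + d)) ((c * lam + d) * t)
        (intMatrixProdHom a b c d P) := by
  have hslope : (a * lam + b) / (c * lam + d) * ((c * lam + d) * t) = a * (lam * t) + b * t := by
    rw [div_mul_eq_mul_div, div_eq_iff hc]
    ring
  have hspeed : (c * lam + d) * t = c * (lam * t) + d * t := by ring
  change intMatrixProdHom a b c d (P + (((lam * t : ℝ) : AddCircle p), ((t : ℝ) : AddCircle p))) = _
  rw [map_add, intMatrixProdHom_coe, kroneckerFlow, hslope, hspeed]
  rfl

lemma image_intMatrixProdHom_kroneckerOrbit {lam : ℝ} {a b c d : ℤ} (hc : (c : ℝ) * lam + d ≠ 0)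
    (P : AddCircle p × AddCircle p) :
    intMatrixProdHom a b c d '' kroneckerOrbit p lam P =
      kroneckerOrbit p ((a * lam + b) / (c * lam + d)) (intMatrixProdHom a b c d P) := by
  ext Q
  constructor
  · rintro ⟨_, ⟨t, rfl⟩, rfl⟩
    exact ⟨_, intMatrixProdHom_kroneckerFlow hc P t⟩
  · rintro ⟨s, rfl⟩
    refine ⟨_, ⟨s / (c * lam + d), rfl⟩, ?_⟩
    rw [intMatrixProdHom_kroneckerFlow hc, mul_div_cancel₀ s hc]

end KroneckerFlow

/-- For λ ∈ ℝ and an integer matrix [[a,b],[c,d]] with determinant ±1 and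
cλ + d ≠ 0, setting μ = (aλ+b)/(cλ+d), the map of the torus T² = (ℝ/2πℤ)² induced by
(x,y) ↦ (ax+by, cx+dy) is a well-defined homeomorphism mapping each orbit of the
Kronecker flow ·_λ onto an orbit of ·_μ; in fact φ(t ·_λ P) = ((cλ+d)t) ·_μ φ(P).
Hence the Kronecker foliations F_λ and F_μ are topologically equivalent. -/
theorem stmt2 (lam : ℝ) (a b c d : ℤ)
    (hdet : a * d - b * c = 1 ∨ a * d - b * c = -1)
    (hc : (c : ℝ) * lam + d ≠ 0)
    (mu : ℝ) (hmu : mu = ((a : ℝ) * lam + b) / ((c : ℝ) * lam + d)) :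
    ∃ φ : (AddCircle (2 * Real.pi) × AddCircle (2 * Real.pi)) ≃ₜ
          (AddCircle (2 * Real.pi) × AddCircle (2 * Real.pi)),
      (∀ x y : ℝ,
        φ ((x : AddCircle (2 * Real.pi)), (y : AddCircle (2 * Real.pi))) =
          ((((a : ℝ) * x + (b : ℝ) * y : ℝ) : AddCircle (2 * Real.pi)),
           (((c : ℝ) * x + (d : ℝ) * y : ℝ) : AddCircle (2 * Real.pi)))) ∧
      (∀ P : AddCircle (2 * Real.pi) × AddCircle (2 * Real.pi), ∀ t : ℝ,
        φ (P.1 + ((lam * t : ℝ) : AddCircle (2 * Real.pi)),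
           P.2 + ((t : ℝ) : AddCircle (2 * Real.pi))) =
          ((φ P).1 + ((mu * (((c : ℝ) * lam + d) * t) : ℝ) : AddCircle (2 * Real.pi)),
           (φ P).2 + ((((c : ℝ) * lam + d) * t : ℝ) : AddCircle (2 * Real.pi)))) ∧
      (∀ P : AddCircle (2 * Real.pi) × AddCircle (2 * Real.pi),
        φ '' {Q | ∃ t : ℝ, Q = (P.1 + ((lam * t : ℝ) : AddCircle (2 * Real.pi)),
                                P.2 + ((t : ℝ) : AddCircle (2 * Real.pi)))} =
          {Q | ∃ s : ℝ, Q = ((φ P).1 + ((mu * s : ℝ) : AddCircle (2 * Real.pi)),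
                             (φ P).2 + ((s : ℝ) : AddCircle (2 * Real.pi)))}) := by
  subst hmu
  exact ⟨intMatrixProdHomeomorph (Int.isUnit_iff.mpr hdet), intMatrixProdHom_coe a b c d,
    intMatrixProdHom_kroneckerFlow hc, image_intMatrixProdHom_kroneckerOrbit hc⟩
end

section
/- Let m ≥ 1 be an integer and let a, b ∈ ℂ with |a|² + |b|² = 1 and b ≠ 0. Let S = {t ∈ ℂ : |(a + bᵐ·t)·exp(m·t)|² + |b·exp(t)|² = 1} (the parameter set of the intersection of the integral curve of (mx + yᵐ) ∂/∂x + y ∂/∂y through (a,b) with the unit sphere). Then 0 ∈ S, and there exists a real number t₀ ≥ 0 such that for every r ∈ ℝ: the set {s ∈ ℝ : r + i·s ∈ S} has exactly two elements if r < t₀, exactly one element if r = t₀, and is empty if r > t₀. -/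
/-!
On the vertical line `t = r + s i` the defining equation of `S` is a real quadratic equation in
`s` with positive leading coefficient, and its discriminant is a positive multiple of
`1 - M r`, where `M r` is the minimum of the left-hand side over that line. Hence the line meets
`S` in two, one or no points according as `M r < 1`, `M r = 1` or `M r > 1`. Finally
`M 0 ≤ ‖a‖² + ‖b‖² = 1`, `M r ≥ ‖b‖² e^{2r}` is eventually `≥ 1`, and `M' > 0` wherever
`M ≤ 1`, so `M` crosses the level `1` exactly once, at some `t₀ ≥ 0`.
-/

open Complex Set ComplexConjugate

theorem lt_of_deriv_pos_on_sublevel {f : ℝ → ℝ} {L : ℝ} (hf : Differentiable ℝ f)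
    (hpos : ∀ x, f x ≤ L → 0 < deriv f x) {x y : ℝ} (hxy : x < y) (hy : f y ≤ L) :
    f x < L := by
  -- backwards in time from `y`, `f` cannot leave `{f ≤ L}` since it decreases on reaching `L`
  have hle : ∀ z ∈ Icc x y, f z ≤ L := by
    have hback := image_le_of_deriv_right_lt_deriv_boundary (f := fun t => f (-t))
      (f' := fun t => -deriv f (-t)) (a := -y) (b := -x) (B := fun _ => L) (B' := fun _ => 0)
      (hf.comp differentiable_neg).continuous.continuousOn
      (fun t _ => (((hf (-t)).hasDerivAt.comp t (hasDerivAt_neg t)).congr_deriv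
        (mul_neg_one _)).hasDerivWithinAt)
      (by simpa using hy) (fun _ => hasDerivAt_const _ _)
      (fun t _ ht => neg_neg_of_pos (hpos _ ht.le))
    intro z hz
    simpa using hback (show -z ∈ Icc (-y) (-x) from ⟨neg_le_neg hz.2, neg_le_neg hz.1⟩)
  have hmono : StrictMonoOn f (Icc x y) :=
    strictMonoOn_of_deriv_pos (convex_Icc x y) hf.continuous.continuousOn
      fun z hz => hpos z (hle z (interior_subset hz))
  exact (hmono ⟨le_rfl, hxy.le⟩ ⟨hxy.le, le_rfl⟩ hxy).trans_le hy

theorem exists_crossing_of_deriv_pos_on_sublevel {f : ℝ → ℝ} {L R : ℝ}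
    (hf : Differentiable ℝ f) (hpos : ∀ x, f x ≤ L → 0 < deriv f x) (hR : 0 ≤ R)
    (h0 : f 0 ≤ L) (hfR : L ≤ f R) :
    ∃ t₀, 0 ≤ t₀ ∧ f t₀ = L ∧ (∀ r < t₀, f r < L) ∧ ∀ r, t₀ < r → L < f r := by
  obtain ⟨t₀, ht₀, hft₀⟩ :=
    intermediate_value_Icc hR hf.continuous.continuousOn ⟨h0, hfR⟩
  refine ⟨t₀, ht₀.1, hft₀, fun r hr => lt_of_deriv_pos_on_sublevel hf hpos hr hft₀.le,
    fun r hr => ?_⟩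
  by_contra! hr'
  exact (lt_of_deriv_pos_on_sublevel hf hpos hr hr').ne hft₀

theorem encard_quadratic_roots_of_discrim_pos {a b c : ℝ} (ha : a ≠ 0)
    (h : 0 < discrim a b c) : {x : ℝ | a * (x * x) + b * x + c = 0}.encard = 2 := by
  have hs : discrim a b c = √(discrim a b c) * √(discrim a b c) :=
    (Real.mul_self_sqrt h.le).symm
  have hroots : {x : ℝ | a * (x * x) + b * x + c = 0}
      = {(-b + √(discrim a b c)) / (2 * a), (-b - √(discrim a b c)) / (2 * a)} := by
    ext x
    exact quadratic_eq_zero_iff ha hs x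
  rw [hroots, encard_pair]
  have := Real.sqrt_pos.mpr h
  rw [Ne, div_left_inj' (mul_ne_zero two_ne_zero ha)]
  linarith

theorem encard_quadratic_roots_of_discrim_eq_zero {a b c : ℝ} (ha : a ≠ 0)
    (h : discrim a b c = 0) : {x : ℝ | a * (x * x) + b * x + c = 0}.encard = 1 := by
  rw [encard_eq_one]
  exact ⟨-b / (2 * a), Set.ext (quadratic_eq_zero_iff_of_discrim_eq_zero ha h)⟩

theorem quadratic_roots_eq_empty_of_discrim_neg {a b c : ℝ} (h : discrim a b c < 0) :
    {x : ℝ | a * (x * x) + b * x + c = 0} = ∅ :=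
  eq_empty_iff_forall_notMem.mpr
    (quadratic_ne_zero_of_discrim_ne_sq fun s => (h.trans_le (sq_nonneg s)).ne)

theorem normSq_add_ofReal_mul (c w : ℂ) (s : ℝ) :
    normSq (c + s * w) = normSq w * (s * s) + 2 * (c * conj w).re * s + normSq c := by
  rw [normSq_add, map_mul, normSq_ofReal, map_mul, conj_ofReal, mul_left_comm, re_ofReal_mul]
  ring

noncomputable def leafNormSq (m : ℕ) (a b t : ℂ) : ℝ :=
  ‖(a + b ^ m * t) * Complex.exp ((m : ℂ) * t)‖ ^ 2 + ‖b * Complex.exp t‖ ^ 2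

/-- For `b ≠ 0`, the minimum of `s ↦ leafNormSq m a b (r + s * I)`. -/
noncomputable def leafNormSqMin (m : ℕ) (a b : ℂ) (r : ℝ) : ℝ :=
  Real.exp (2 * m * r) * ((a * conj (b ^ m)).re + normSq (b ^ m) * r) ^ 2 / normSq (b ^ m)
    + normSq b * Real.exp (2 * r)

section

variable (m : ℕ) (a b : ℂ)

theorem leafNormSq_zero : leafNormSq m a b 0 = ‖a‖ ^ 2 + ‖b‖ ^ 2 := by
  simp [leafNormSq]

theorem leafNormSq_ofReal_add_mul_I (r s : ℝ) :
    leafNormSq m a b (r + s * I) =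
      Real.exp (2 * m * r) * normSq (a + b ^ m * r + s * (b ^ m * I))
        + normSq b * Real.exp (2 * r) := by
  have hexp_sq : ∀ x : ℝ, Real.exp x ^ 2 = Real.exp (2 * x) := fun x => by
    rw [← Real.exp_nat_mul]; norm_num
  simp only [leafNormSq, norm_mul, mul_pow, Complex.norm_exp, Complex.sq_norm, hexp_sq]
  have hre : ((m : ℂ) * (r + s * I)).re = m * r := by simp
  have hre' : ((r : ℂ) + s * I).re = r := by simp
  rw [hre, hre', ← mul_assoc (2 : ℝ),
    show a + b ^ m * (r + s * I) = a + b ^ m * r + s * (b ^ m * I) by ring]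
  ring

theorem exists_quadratic_leafNormSq_vertical (hb : b ≠ 0) (r : ℝ) :
    ∃ A B C : ℝ, 0 < A ∧ discrim A B C = 4 * A * (1 - leafNormSqMin m a b r) ∧
      {s : ℝ | leafNormSq m a b (r + s * I) = 1} = {s | A * (s * s) + B * s + C = 0} := by
  set c := a + b ^ m * r
  set w := b ^ m * I
  have hK : 0 < normSq (b ^ m) := normSq_pos.mpr (pow_ne_zero m hb)
  have hlagrange : (c * conj w).re ^ 2 + ((a * conj (b ^ m)).re + normSq (b ^ m) * r) ^ 2
      = normSq c * normSq (b ^ m) := by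
    simp only [c, w, normSq_apply, mul_re, mul_im, add_re, add_im, conj_re, conj_im, I_re, I_im,
      ofReal_re, ofReal_im]
    ring
  have hw : normSq w = normSq (b ^ m) := by simp [w]
  refine ⟨Real.exp (2 * m * r) * normSq w, 2 * Real.exp (2 * m * r) * (c * conj w).re,
    Real.exp (2 * m * r) * normSq c + normSq b * Real.exp (2 * r) - 1, ?_, ?_, ?_⟩
  · rw [hw]
    positivity
  · rw [hw, discrim, leafNormSqMin]
    field_simp
    linear_combination 4 * Real.exp (2 * m * r) * hlagrange
  · ext s
    rw [mem_ofPred_eq, mem_ofPred_eq, leafNormSq_ofReal_add_mul_I, normSq_add_ofReal_mul]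
    constructor <;> intro h <;> linarith

theorem hasDerivAt_leafNormSqMin (hb : b ≠ 0) (r : ℝ) :
    HasDerivAt (leafNormSqMin m a b)
      (2 * (m * (Real.exp (2 * m * r) * ((a * conj (b ^ m)).re + normSq (b ^ m) * r) ^ 2
          / normSq (b ^ m))
        + Real.exp (2 * m * r) * ((a * conj (b ^ m)).re + normSq (b ^ m) * r)
        + normSq b * Real.exp (2 * r))) r := by
  have hK : normSq (b ^ m) ≠ 0 := (normSq_pos.mpr (pow_ne_zero m hb)).ne'
  have hE := ((hasDerivAt_id r).const_mul (2 * m : ℝ)).exp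
  have hq := (((hasDerivAt_id r).const_mul (normSq (b ^ m))).const_add
    (a * conj (b ^ m)).re).pow 2
  have hY := ((hasDerivAt_id r).const_mul (2 : ℝ)).exp.const_mul (normSq b)
  refine (((hE.mul hq).div_const (normSq (b ^ m))).add hY).congr_deriv ?_
  simp only [id_eq, Pi.pow_apply]
  field_simp
  ring

theorem deriv_leafNormSqMin_pos (hm : 1 ≤ m) (hb : b ≠ 0) {r : ℝ}
    (hr : leafNormSqMin m a b r ≤ 1) : 0 < deriv (leafNormSqMin m a b) r := by
  rw [(hasDerivAt_leafNormSqMin m a b hb r).deriv]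
  unfold leafNormSqMin at hr
  have hK : 0 < normSq (b ^ m) := normSq_pos.mpr (pow_ne_zero m hb)
  set E := Real.exp (2 * m * r)
  set q := (a * conj (b ^ m)).re + normSq (b ^ m) * r
  set Y := normSq b * Real.exp (2 * r)
  set P := E * q ^ 2 / normSq (b ^ m)
  have hY : 0 < Y := mul_pos (normSq_pos.mpr hb) (Real.exp_pos _)
  have hP : 0 ≤ P := by positivity
  have hEK : E * normSq (b ^ m) = Y ^ m := by
    simp only [E, Y]
    rw [map_pow, mul_pow, ← Real.exp_nat_mul]
    ring_nf
  -- `(E q)² = P · Y^m ≤ P · Y ≤ ((P + Y) / 2)²`, so `|E q| ≤ (P + Y) / 2`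
  have hEq_sq : (E * q) ^ 2 ≤ ((P + Y) / 2) ^ 2 := by
    have hmul : (E * q) ^ 2 = P * Y ^ m := by
      rw [← hEK]
      simp only [P]
      field_simp
    have hYm : Y ^ m ≤ Y := pow_le_of_le_one hY.le (by linarith) (by omega)
    nlinarith [sq_nonneg (P - Y), mul_le_mul_of_nonneg_left hYm hP]
  have hEq := (abs_le_of_sq_le_sq' hEq_sq (by positivity)).1
  have hmP : P ≤ m * P := le_mul_of_one_le_left hP (by exact_mod_cast hm)
  linarith

theorem leafNormSqMin_zero_le : leafNormSqMin m a b 0 ≤ ‖a‖ ^ 2 + ‖b‖ ^ 2 := by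
  have hre : (a * conj (b ^ m)).re ^ 2 ≤ normSq a * normSq (b ^ m) := by
    rw [sq, ← normSq_conj (b ^ m), ← map_mul]
    exact re_sq_le_normSq _
  have hdiv := div_le_of_le_mul₀ (normSq_nonneg (b ^ m)) (normSq_nonneg a) hre
  simp only [leafNormSqMin, mul_zero, add_zero, Real.exp_zero, one_mul, mul_one, Complex.sq_norm]
  linarith

theorem exists_one_le_leafNormSqMin (hb : b ≠ 0) : ∃ R, 0 ≤ R ∧ 1 ≤ leafNormSqMin m a b R := by
  have hb' : 0 < normSq b := normSq_pos.mpr hb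
  set R := (2 * normSq b)⁻¹
  refine ⟨R, by positivity, ?_⟩
  have hfirst : 0 ≤ Real.exp (2 * m * R) *
      ((a * conj (b ^ m)).re + normSq (b ^ m) * R) ^ 2 / normSq (b ^ m) :=
    div_nonneg (by positivity) (normSq_nonneg _)
  have hsecond : 1 ≤ normSq b * Real.exp (2 * R) := calc
    1 ≤ normSq b * (2 * R + 1) := by
      simp only [R]
      field_simp
      linarith
    _ ≤ _ := mul_le_mul_of_nonneg_left (Real.add_one_le_exp _) hb'.le
  unfold leafNormSqMin
  linarith

end

/-- For m ≥ 1 and (a,b) on the unit sphere of ℂ² with b ≠ 0, the parameter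
set S of the intersection of the integral curve of (mx + yᵐ)∂/∂x + y∂/∂y through (a,b)
with the unit sphere contains 0, and there is t₀ ≥ 0 such that on each vertical line
Re t = r the set S has exactly two points if r < t₀, one point if r = t₀, and is empty
if r > t₀. -/
theorem stmt4 (m : ℕ) (hm : 1 ≤ m) (a b : ℂ)
    (hab : ‖a‖ ^ 2 + ‖b‖ ^ 2 = 1) (hb : b ≠ 0) :
    (0 : ℂ) ∈ {t : ℂ | ‖(a + b ^ m * t) * Complex.exp ((m : ℂ) * t)‖ ^ 2 +
        ‖b * Complex.exp t‖ ^ 2 = 1} ∧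
    ∃ t₀ : ℝ, 0 ≤ t₀ ∧ ∀ r : ℝ,
      (r < t₀ →
        {s : ℝ | ((r : ℂ) + (s : ℂ) * Complex.I) ∈
          {t : ℂ | ‖(a + b ^ m * t) * Complex.exp ((m : ℂ) * t)‖ ^ 2 +
            ‖b * Complex.exp t‖ ^ 2 = 1}}.encard = 2) ∧
      (r = t₀ →
        {s : ℝ | ((r : ℂ) + (s : ℂ) * Complex.I) ∈
          {t : ℂ | ‖(a + b ^ m * t) * Complex.exp ((m : ℂ) * t)‖ ^ 2 +
            ‖b * Complex.exp t‖ ^ 2 = 1}}.encard = 1) ∧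
      (t₀ < r →
        {s : ℝ | ((r : ℂ) + (s : ℂ) * Complex.I) ∈
          {t : ℂ | ‖(a + b ^ m * t) * Complex.exp ((m : ℂ) * t)‖ ^ 2 +
            ‖b * Complex.exp t‖ ^ 2 = 1}} = ∅) := by
  simp only [← leafNormSq.eq_1, mem_ofPred_eq]
  have hM : Differentiable ℝ (leafNormSqMin m a b) := fun r =>
    (hasDerivAt_leafNormSqMin m a b hb r).differentiableAt
  obtain ⟨R, hR, hMR⟩ := exists_one_le_leafNormSqMin m a b hb
  obtain ⟨t₀, ht₀, hMt₀, hlt, hgt⟩ := exists_crossing_of_deriv_pos_on_sublevel hM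
    (fun _ => deriv_leafNormSqMin_pos m a b hm hb) hR (hab ▸ leafNormSqMin_zero_le m a b) hMR
  refine ⟨(leafNormSq_zero m a b).trans hab, t₀, ht₀, fun r => ?_⟩
  obtain ⟨A, B, C, hA, hdisc, hslice⟩ := exists_quadratic_leafNormSq_vertical m a b hb r
  rw [hslice]
  refine ⟨fun hr => encard_quadratic_roots_of_discrim_pos hA.ne' ?_,
    fun hr => encard_quadratic_roots_of_discrim_eq_zero hA.ne' ?_,
    fun hr => quadratic_roots_eq_empty_of_discrim_neg ?_⟩ <;> rw [hdisc]
  · nlinarith [hlt r hr]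
  · rw [hr, hMt₀, sub_self, mul_zero]
  · nlinarith [hgt r hr]
end

section
/- Let m ≥ 1 be an integer and let a, b ∈ ℂ with |a|² + |b|² = 1 and b ≠ 0. Let L = {((a + bᵐ·t)·exp(m·t), b·exp(t)) : t ∈ ℂ, |(a + bᵐ·t)·exp(m·t)|² + |b·exp(t)|² = 1} ⊆ ℂ² be the intersection of the integral curve of (mx + yᵐ) ∂/∂x + y ∂/∂y through (a,b) with the unit sphere. Then the closure of L in ℂ² equals L ∪ {(x,0) : x ∈ ℂ, |x| = 1}. In particular L is not a closed subset of ℂ², while the leaf {(x,0) : |x| = 1} of the intersection foliation is closed. -/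
/-!
Write `y = b e^t` and `z = t + a / b^m`; then the first coordinate of the leaf is `x = z y^m`.
On the sphere `|x| ≤ 1`, so `|z| ≤ |y|^(-m)`: the points of `L` with `|y|` bounded below come
from a compact set of parameters, hence every limit point of `L` outside `L` has `y = 0`.
Conversely, the sphere condition `|z|² |y|^(2m) + |y|² = 1` has, for `Re t → -∞`, a solution
branch in the upper half plane with `Im t → +∞`. Along it `y → 0`, `|x| → 1`, and the argument of
`x = z b^m e^(mt)` keeps winding through the factor `e^(i m Im t)`, so by the intermediate value
theorem the branch passes arbitrarily close to every point of the circle `{y = 0, |x| = 1}`.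
-/

open Complex Filter Topology Set
open scoped Real

theorem tendsto_sq_mul_exp_mul_atBot {k : ℝ} (hk : 0 < k) :
    Tendsto (fun σ => σ ^ 2 * Real.exp (k * σ)) atBot (𝓝 0) := by
  have h := (Real.tendsto_pow_mul_exp_neg_atTop_nhds_zero 2).comp
    (tendsto_neg_atBot_atTop.const_mul_atTop hk)
  convert h.const_mul (k ^ 2)⁻¹ using 1
  · ext σ; simp only [Function.comp_apply]; field_simp
  · simp

theorem mul_mul_exp_eq_norm_mul_exp (u v w : ℂ) :
    u * v * exp w = ‖u * v * exp w‖ * exp ((arg u + arg v + w.im) * I) := by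
  conv_lhs => rw [← norm_mul_exp_arg_mul_I u, ← norm_mul_exp_arg_mul_I v, ← re_add_im w]
  simp only [norm_mul, norm_exp, ofReal_mul, ofReal_exp, add_mul, Complex.exp_add]
  ring

theorem exists_mem_Icc_exp_mul_I_eq {g : ℝ → ℝ} {α β : ℝ} (hαβ : α ≤ β)
    (hg : ContinuousOn g (Icc α β)) (hwind : g β + 2 * π ≤ g α) (φ : ℝ) :
    ∃ σ ∈ Icc α β, exp (g σ * I) = exp (φ * I) := by
  have hφ := toIcoMod_mem_Ico Real.two_pi_pos (g β) φ
  obtain ⟨σ, hσ, hgσ⟩ := intermediate_value_Icc' hαβ hg ⟨hφ.1, by linarith [hφ.2]⟩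
  have hdiv := self_sub_toIcoMod_eq_mul Real.two_pi_pos (g β) φ
  refine ⟨σ, hσ, exp_eq_exp_iff_exists_int.2 ⟨-toIcoDiv Real.two_pi_pos (g β) φ, ?_⟩⟩
  have h := congrArg (fun r : ℝ => (r : ℂ) * I) hdiv
  push_cast at h ⊢
  rw [hgσ]
  linear_combination -h

theorem dist_le_norm_of_sq_add_sq_eq_one {x y : ℂ} (hx : ‖x‖ = 1) {s : ℝ} (hs : 0 ≤ s)
    (h : s ^ 2 + ‖y‖ ^ 2 = 1) : dist ((s : ℂ) * x, y) (x, 0) ≤ ‖y‖ := by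
  rw [Prod.dist_eq, dist_zero_right]
  refine max_le ?_ le_rfl
  rw [dist_eq_norm, ← sub_one_mul, norm_mul, hx, mul_one, ← ofReal_one, ← ofReal_sub,
    norm_real, Real.norm_eq_abs, abs_sub_comm, abs_of_nonneg (by nlinarith [norm_nonneg y])]
  nlinarith [norm_nonneg y]

-- `Metric.sphere (0 : ℂ × ℂ) 1` would be the sphere of the sup norm.
def sphere3 : Set (ℂ × ℂ) := {p | ‖p.1‖ ^ 2 + ‖p.2‖ ^ 2 = 1}

def circleAxis : Set (ℂ × ℂ) := {p | p.2 = 0 ∧ ‖p.1‖ = 1}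

noncomputable def leafCurve (m : ℕ) (a b t : ℂ) : ℂ × ℂ :=
  ((a + b ^ m * t) * exp (m * t), b * exp t)

def leafSphere (m : ℕ) (a b : ℂ) : Set (ℂ × ℂ) :=
  {p | ∃ t, leafCurve m a b t ∈ sphere3 ∧ p = leafCurve m a b t}

theorem isClosed_sphere3 : IsClosed sphere3 :=
  isClosed_eq (by fun_prop) continuous_const

theorem isClosed_circleAxis : IsClosed circleAxis :=
  (isClosed_eq continuous_snd continuous_const).inter
    (isClosed_eq (by fun_prop) continuous_const)

section Leaf

variable {m : ℕ} {a b : ℂ}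

theorem continuous_leafCurve : Continuous (leafCurve m a b) := by
  unfold leafCurve; fun_prop

theorem leafSphere_subset_sphere3 : leafSphere m a b ⊆ sphere3 := by
  rintro _ ⟨t, ht, rfl⟩
  exact ht

theorem norm_leafCurve_snd (t : ℂ) : ‖(leafCurve m a b t).2‖ = ‖b‖ * Real.exp t.re := by
  simp [leafCurve, norm_exp]

theorem leafCurve_fst_eq_mul_snd_pow (hb : b ≠ 0) (t : ℂ) :
    (leafCurve m a b t).1 = (t + a / b ^ m) * (leafCurve m a b t).2 ^ m := by
  simp only [leafCurve, mul_pow, ← exp_nat_mul]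
  field_simp
  ring

theorem norm_add_div_mul_norm_snd_pow_le_one (hb : b ≠ 0) {t : ℂ}
    (ht : leafCurve m a b t ∈ sphere3) :
    ‖t + a / b ^ m‖ * ‖(leafCurve m a b t).2‖ ^ m ≤ 1 := by
  have hx : ‖(leafCurve m a b t).1‖ ^ 2 ≤ 1 := by
    have := ht.out; nlinarith [sq_nonneg ‖(leafCurve m a b t).2‖]
  rw [← norm_pow, ← norm_mul, ← leafCurve_fst_eq_mul_snd_pow hb]
  exact (sq_le_one_iff₀ (norm_nonneg _)).1 hx

theorem closure_leafSphere_subset (hb : b ≠ 0) :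
    closure (leafSphere m a b) ⊆ leafSphere m a b ∪ circleAxis := by
  intro p hp
  have hpS : p ∈ sphere3 := closure_minimal leafSphere_subset_sphere3 isClosed_sphere3 hp
  by_cases hp2 : p.2 = 0
  · refine Or.inr ⟨hp2, ?_⟩
    have : ‖p.1‖ ^ 2 = 1 := by simpa [hp2] using hpS.out
    exact (pow_eq_one_iff_of_nonneg (norm_nonneg _) two_ne_zero).1 this
  left
  set δ := ‖p.2‖ / 2
  have hδ0 : 0 < δ := by positivity
  set K := {t | leafCurve m a b t ∈ sphere3} ∩ Metric.closedBall (-(a / b ^ m)) (1 / δ ^ m)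
  have hK : IsCompact (leafCurve m a b '' K) :=
    ((isCompact_closedBall _ _).inter_left
      (isClosed_sphere3.preimage continuous_leafCurve)).image continuous_leafCurve
  have hU : IsOpen {q : ℂ × ℂ | δ < ‖q.2‖} := isOpen_lt continuous_const (by fun_prop)
  have hLU : {q : ℂ × ℂ | δ < ‖q.2‖} ∩ leafSphere m a b ⊆ leafCurve m a b '' K := by
    rintro _ ⟨hq, t, ht, rfl⟩
    refine ⟨t, ⟨ht, ?_⟩, rfl⟩
    rw [Metric.mem_closedBall, dist_eq_norm, sub_neg_eq_add, le_div_iff₀ (by positivity)]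
    calc ‖t + a / b ^ m‖ * δ ^ m ≤ ‖t + a / b ^ m‖ * ‖(leafCurve m a b t).2‖ ^ m := by
          gcongr; exact hq.out.le
      _ ≤ 1 := norm_add_div_mul_norm_snd_pow_le_one hb ht
  have hpK : p ∈ leafCurve m a b '' K := by
    rw [← hK.isClosed.closure_eq]
    exact closure_mono hLU (hU.inter_closure ⟨half_lt_self (norm_pos_iff.2 hp2), hp⟩)
  obtain ⟨t, ht, rfl⟩ := hpK
  exact ⟨t, ht.1, rfl⟩

end Leaf

section Construction

variable (m : ℕ) (a b : ℂ)

/- For `t = z - a / b ^ m` with `Re z = σ`, `‖y‖ = leafSndNorm σ`, and by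
`leafCurve_fst_eq_mul_snd_pow` the sphere condition reads `‖z‖² = (1 - ‖y‖²) / ‖y‖^(2m)`.
`leafZ σ` is the solution with `Re z = σ` and `Im z ≥ 0`, provided `0 ≤ leafRadicand σ`. -/

noncomputable def leafSndNorm (σ : ℝ) : ℝ := ‖b‖ * Real.exp (σ - (a / b ^ m).re)

noncomputable def leafRadicand (σ : ℝ) : ℝ :=
  (1 - leafSndNorm m a b σ ^ 2) / leafSndNorm m a b σ ^ (2 * m) - σ ^ 2

noncomputable def leafZ (σ : ℝ) : ℂ := ⟨σ, √(leafRadicand m a b σ)⟩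

-- A continuous branch, as long as `Im (leafZ σ) > 0`, of the argument of the first coordinate
-- `z * b ^ m * exp (m * t)`.
noncomputable def leafArg (σ : ℝ) : ℝ :=
  arg (leafZ m a b σ) + arg (b ^ m) + m * (leafZ m a b σ - a / b ^ m).im

variable {m a b}

@[simp]
theorem leafZ_im (σ : ℝ) : (leafZ m a b σ).im = √(leafRadicand m a b σ) := rfl

theorem leafSndNorm_pos (hb : b ≠ 0) (σ : ℝ) : 0 < leafSndNorm m a b σ := by
  unfold leafSndNorm; positivity

theorem norm_leafCurve_leafZ_snd (σ : ℝ) :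
    ‖(leafCurve m a b (leafZ m a b σ - a / b ^ m)).2‖ = leafSndNorm m a b σ := by
  simp [norm_leafCurve_snd, leafSndNorm, leafZ]

theorem leafCurve_leafZ_mem_sphere3 (hb : b ≠ 0) {σ : ℝ} (hσ : 0 ≤ leafRadicand m a b σ) :
    leafCurve m a b (leafZ m a b σ - a / b ^ m) ∈ sphere3 := by
  have hz : ‖leafZ m a b σ‖ ^ 2 = σ ^ 2 + leafRadicand m a b σ := by
    simp only [leafZ, Complex.sq_norm, normSq_mk, Real.mul_self_sqrt hσ]; ring
  have hη := (leafSndNorm_pos hb σ (a := a) (m := m)).ne'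
  show ‖_‖ ^ 2 + ‖_‖ ^ 2 = 1
  rw [leafCurve_fst_eq_mul_snd_pow hb, sub_add_cancel, norm_mul, norm_pow,
    norm_leafCurve_leafZ_snd, mul_pow, hz, leafRadicand]
  field_simp
  ring

theorem leafCurve_leafZ_fst (hb : b ≠ 0) (σ : ℝ) :
    (leafCurve m a b (leafZ m a b σ - a / b ^ m)).1 =
      ‖(leafCurve m a b (leafZ m a b σ - a / b ^ m)).1‖ * exp (leafArg m a b σ * I) := by
  have h : (leafCurve m a b (leafZ m a b σ - a / b ^ m)).1 =
      leafZ m a b σ * b ^ m * exp (m * (leafZ m a b σ - a / b ^ m)) := by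
    rw [leafCurve_fst_eq_mul_snd_pow hb, sub_add_cancel, leafCurve, mul_pow, ← exp_nat_mul,
      mul_assoc]
  rw [h, leafArg]
  conv_lhs => rw [mul_mul_exp_eq_norm_mul_exp]
  simp

theorem continuous_leafRadicand (hb : b ≠ 0) : Continuous (leafRadicand m a b) := by
  have : Continuous (leafSndNorm m a b) := by unfold leafSndNorm; fun_prop
  exact ((continuous_const.sub (this.pow 2)).div (this.pow _)
    fun σ => pow_ne_zero _ (leafSndNorm_pos hb σ).ne').sub (continuous_pow 2)

theorem continuousOn_leafArg (hb : b ≠ 0) :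
    ContinuousOn (leafArg m a b) {σ | 0 < leafRadicand m a b σ} := by
  have hz : Continuous (leafZ m a b) := by
    have hr := continuous_leafRadicand hb (m := m) (a := a)
    have : leafZ m a b = fun σ : ℝ => (σ : ℂ) + (√(leafRadicand m a b σ) : ℂ) * I := by
      funext σ; apply Complex.ext <;> simp [leafZ]
    rw [this]
    fun_prop
  intro σ hσ
  have harg : ContinuousAt arg (leafZ m a b σ) :=
    continuousAt_arg (mem_slitPlane_iff.2 (Or.inr (Real.sqrt_pos.2 hσ).ne'))
  refine ContinuousAt.continuousWithinAt ?_
  unfold leafArg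
  exact ((harg.comp hz.continuousAt).add continuousAt_const).add
    (continuousAt_const.mul (continuous_im.comp (hz.sub continuous_const)).continuousAt)

theorem tendsto_leafSndNorm : Tendsto (leafSndNorm m a b) atBot (𝓝 0) := by
  unfold leafSndNorm
  simpa [sub_eq_add_neg] using (Real.tendsto_exp_atBot.comp
    (tendsto_atBot_add_const_right _ (-(a / b ^ m).re) tendsto_id)).const_mul ‖b‖

theorem tendsto_leafRadicand (hm : 0 < m) (hb : b ≠ 0) :
    Tendsto (leafRadicand m a b) atBot atTop := by
  set η := leafSndNorm m a b with hη_def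
  have hη : ∀ σ, 0 < η σ := leafSndNorm_pos hb
  have hpow : Tendsto (fun σ => η σ ^ (2 * m)) atBot (𝓝[>] 0) := by
    refine tendsto_nhdsWithin_iff.2 ⟨?_, Eventually.of_forall fun σ => pow_pos (hη σ) _⟩
    simpa [hm.ne'] using tendsto_leafSndNorm.pow (2 * m)
  have hpow_eq : ∀ σ, η σ ^ (2 * m) =
      (‖b‖ * Real.exp (-(a / b ^ m).re)) ^ (2 * m) * Real.exp ((2 * m : ℕ) * σ) := by
    intro σ
    rw [Real.exp_nat_mul, ← mul_pow, mul_assoc, ← Real.exp_add, neg_add_eq_sub, hη_def,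
      leafSndNorm]
  have hsq : Tendsto (fun σ => σ ^ 2 * η σ ^ (2 * m)) atBot (𝓝 0) := by
    have := (tendsto_sq_mul_exp_mul_atBot (k := ((2 * m : ℕ) : ℝ)) (by positivity)).const_mul
      ((‖b‖ * Real.exp (-(a / b ^ m).re)) ^ (2 * m))
    rw [mul_zero] at this
    refine this.congr fun σ => ?_
    rw [hpow_eq]; ring
  have hfactor : Tendsto (fun σ => 1 - η σ ^ 2 - σ ^ 2 * η σ ^ (2 * m)) atBot (𝓝 1) := by
    simpa using (tendsto_const_nhds.sub (tendsto_leafSndNorm.pow 2)).sub hsq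
  refine (hpow.inv_tendsto_nhdsGT_zero.atTop_mul_pos one_pos hfactor).congr fun σ => ?_
  have := (pow_pos (hη σ) (2 * m)).ne'
  simp only [Pi.inv_apply, leafRadicand, ← hη_def]
  field_simp

theorem circleAxis_subset_closure_leafSphere (hm : 1 ≤ m) (hb : b ≠ 0) :
    circleAxis ⊆ closure (leafSphere m a b) := by
  rintro ⟨x, y⟩ ⟨hy, hx⟩
  obtain rfl : y = 0 := hy
  rw [Metric.mem_closure_iff]
  intro ε hε
  have hr := tendsto_leafRadicand (by omega) hb (m := m) (a := a)
  obtain ⟨σ₀, hσ₀⟩ : ∃ σ₀, ∀ σ ≤ σ₀, 0 < leafRadicand m a b σ ∧ leafSndNorm m a b σ < ε :=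
    eventually_atBot.1 <|
      (hr.eventually_gt_atTop 0).and (tendsto_leafSndNorm.eventually_lt_const hε)
  obtain ⟨σ₁, hσ₁, hgap⟩ : ∃ σ₁ ≤ σ₀,
      √(leafRadicand m a b σ₀) + 3 * π ≤ √(leafRadicand m a b σ₁) :=
    ((eventually_le_atBot σ₀).and
      ((Real.tendsto_sqrt_atTop.comp hr).eventually_ge_atTop _)).exists
  -- `m * Im t` grows by at least `3π` from `σ₀` to `σ₁`, while `arg z ∈ [0, π]`.
  have hwind : leafArg m a b σ₀ + 2 * π ≤ leafArg m a b σ₁ := by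
    have h₁ : 0 ≤ arg (leafZ m a b σ₁) := arg_nonneg_iff.2 (Real.sqrt_nonneg _)
    have h₀ := arg_le_pi (leafZ m a b σ₀)
    have hm' : (1 : ℝ) ≤ m := by exact_mod_cast hm
    simp only [leafArg, sub_im, leafZ_im]
    nlinarith [Real.pi_pos]
  obtain ⟨σ, hσ, hexp⟩ := exists_mem_Icc_exp_mul_I_eq hσ₁
    ((continuousOn_leafArg hb).mono fun σ hσ => (hσ₀ σ hσ.2).1) hwind (arg x)
  obtain ⟨hσr, hσε⟩ := hσ₀ σ hσ.2
  have hS := leafCurve_leafZ_mem_sphere3 hb hσr.le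
  refine ⟨_, ⟨_, hS, rfl⟩, ?_⟩
  have hx' : exp (arg x * I) = x := by simpa [hx] using norm_mul_exp_arg_mul_I x
  set p := leafCurve m a b (leafZ m a b σ - a / b ^ m)
  have hp : p = ((‖p.1‖ : ℂ) * x, p.2) :=
    Prod.ext ((leafCurve_leafZ_fst hb σ).trans (by rw [hexp, hx'])) rfl
  rw [dist_comm]
  calc dist p (x, 0) = dist ((‖p.1‖ : ℂ) * x, p.2) (x, 0) := congrArg (dist · _) hp
    _ ≤ ‖p.2‖ := dist_le_norm_of_sq_add_sq_eq_one hx (norm_nonneg _) hS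
    _ < ε := (norm_leafCurve_leafZ_snd σ).trans_lt hσε

theorem closure_leafSphere (hm : 1 ≤ m) (hb : b ≠ 0) :
    closure (leafSphere m a b) = leafSphere m a b ∪ circleAxis :=
  (closure_leafSphere_subset hb).antisymm
    (union_subset subset_closure (circleAxis_subset_closure_leafSphere hm hb))

theorem not_isClosed_leafSphere (hm : 1 ≤ m) (hb : b ≠ 0) :
    ¬ IsClosed (leafSphere m a b) := by
  intro h
  obtain ⟨t, -, ht⟩ : ((1 : ℂ), (0 : ℂ)) ∈ leafSphere m a b :=
    h.closure_subset (circleAxis_subset_closure_leafSphere hm hb ⟨rfl, norm_one⟩)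
  exact mul_ne_zero hb (exp_ne_zero t) (congrArg Prod.snd ht).symm

end Construction

theorem stmt5_general (m : ℕ) (hm : 1 ≤ m) (a b : ℂ)
    (hb : b ≠ 0) :
    closure {p : ℂ × ℂ | ∃ t : ℂ,
        ‖(a + b ^ m * t) * Complex.exp ((m : ℂ) * t)‖ ^ 2 +
          ‖b * Complex.exp t‖ ^ 2 = 1 ∧
        p = ((a + b ^ m * t) * Complex.exp ((m : ℂ) * t), b * Complex.exp t)} =
      {p : ℂ × ℂ | ∃ t : ℂ,
        ‖(a + b ^ m * t) * Complex.exp ((m : ℂ) * t)‖ ^ 2 +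
          ‖b * Complex.exp t‖ ^ 2 = 1 ∧
        p = ((a + b ^ m * t) * Complex.exp ((m : ℂ) * t), b * Complex.exp t)} ∪
      {p : ℂ × ℂ | p.2 = 0 ∧ ‖p.1‖ = 1} ∧
    ¬ IsClosed {p : ℂ × ℂ | ∃ t : ℂ,
        ‖(a + b ^ m * t) * Complex.exp ((m : ℂ) * t)‖ ^ 2 +
          ‖b * Complex.exp t‖ ^ 2 = 1 ∧
        p = ((a + b ^ m * t) * Complex.exp ((m : ℂ) * t), b * Complex.exp t)} ∧
    IsClosed {p : ℂ × ℂ | p.2 = 0 ∧ ‖p.1‖ = 1} :=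
  ⟨closure_leafSphere hm hb, not_isClosed_leafSphere hm hb, isClosed_circleAxis⟩

/-- For m ≥ 1 and (a,b) on the unit sphere of ℂ² with b ≠ 0, the closure
in ℂ² of the intersection L of the integral curve of (mx + yᵐ)∂/∂x + y∂/∂y through
(a,b) with the unit sphere equals L ∪ ({y = 0} ∩ S³); in particular L is not closed
while {(x,0) : |x| = 1} is closed. -/
theorem stmt5 (m : ℕ) (hm : 1 ≤ m) (a b : ℂ)
    (hab : ‖a‖ ^ 2 + ‖b‖ ^ 2 = 1) (hb : b ≠ 0) :
    closure {p : ℂ × ℂ | ∃ t : ℂ,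
        ‖(a + b ^ m * t) * Complex.exp ((m : ℂ) * t)‖ ^ 2 +
          ‖b * Complex.exp t‖ ^ 2 = 1 ∧
        p = ((a + b ^ m * t) * Complex.exp ((m : ℂ) * t), b * Complex.exp t)} =
      {p : ℂ × ℂ | ∃ t : ℂ,
        ‖(a + b ^ m * t) * Complex.exp ((m : ℂ) * t)‖ ^ 2 +
          ‖b * Complex.exp t‖ ^ 2 = 1 ∧
        p = ((a + b ^ m * t) * Complex.exp ((m : ℂ) * t), b * Complex.exp t)} ∪
      {p : ℂ × ℂ | p.2 = 0 ∧ ‖p.1‖ = 1} ∧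
    ¬ IsClosed {p : ℂ × ℂ | ∃ t : ℂ,
        ‖(a + b ^ m * t) * Complex.exp ((m : ℂ) * t)‖ ^ 2 +
          ‖b * Complex.exp t‖ ^ 2 = 1 ∧
        p = ((a + b ^ m * t) * Complex.exp ((m : ℂ) * t), b * Complex.exp t)} ∧
    IsClosed {p : ℂ × ℂ | p.2 = 0 ∧ ‖p.1‖ = 1} :=
  stmt5_general m hm a b hb
end

section
/- Let m ≥ 1 be an integer and let a, b ∈ ℂ with |a|² + |b|² = 1 and b ≠ 0. Then Im(a · (conj b)ᵐ) = 0 if and only if every t ∈ ℂ with t ≠ 0 and |(a + bᵐ·t)·exp(m·t)|² + |b·exp(t)|² = 1 satisfies Re t < 0. (Geometrically: (a,b) is the unique point of maximal distance from {y = 0} on the intersection of its leaf with the unit sphere exactly when Im(a · (conj b)ᵐ) = 0, so the leaves away from {y = 0} are uniquely parametrized by {(a,b) ∈ S³ : Im(a·(conj b)ᵐ) = 0, b ≠ 0}.) -/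
/-!
Write `c = a * conj b ^ m`. Along the leaf,
`|x|² + |y|² = e^{2m Re t} (|a|² + |b|^{2m} |t|² + 2 Re (c * conj t)) + e^{2 Re t} |b|²`.
If `Im c ≠ 0`, the imaginary parameter `t = iθ` with `θ = -2 Im c / |b|^{2m}` lies on the sphere.
If `Im c = 0` and `r = Re t ≥ 0`, then `Re (c * conj t) = r Re c ≥ -r |a| |b|^m`, so the right-hand
side is at least `e^{2r} ((|a| - |b|^m r)² + |b|²)`, which is strictly increasing in `r` and equals
`1` at `r = 0`; at `r = 0` itself the term `|b|^{2m} |t|²` is positive.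
-/

open Complex ComplexConjugate

lemma strictMono_exp_two_mul_mul_sq_add_sq {A B β : ℝ} (hB : B ^ 2 ≤ β ^ 2) (hβ : β ≠ 0) :
    StrictMono fun r : ℝ => Real.exp (2 * r) * ((A - B * r) ^ 2 + β ^ 2) := by
  refine strictMono_of_deriv_pos fun r => ?_
  have hderiv : HasDerivAt (fun r : ℝ => Real.exp (2 * r) * ((A - B * r) ^ 2 + β ^ 2))
      (Real.exp (2 * r) * (2 * ((A - B * r) ^ 2 + β ^ 2) - 2 * B * (A - B * r))) r := by
    have hexp := ((hasDerivAt_id r).const_mul (2 : ℝ)).exp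
    have hsq := ((((hasDerivAt_id r).const_mul B).const_sub A).pow 2).add_const (β ^ 2)
    refine (hexp.mul hsq).congr_deriv ?_
    simp only [id, Pi.pow_apply]
    ring
  rw [hderiv.deriv]
  have hβsq : 0 < β ^ 2 := by positivity
  -- `2u² - 2Bu + 2β² = (u - B)² + u² + (β² - B²) + β²` with `u = A - B r`
  exact mul_pos (Real.exp_pos _) (by nlinarith [sq_nonneg (A - B * r - B), sq_nonneg (A - B * r)])

lemma norm_add_mul_sq (a w t : ℂ) :
    ‖a + w * t‖ ^ 2 =
      ‖a‖ ^ 2 + ‖w‖ ^ 2 * ‖t‖ ^ 2 + 2 * ((a * conj w).re * t.re + (a * conj w).im * t.im) := by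
  simp only [Complex.sq_norm, normSq_add, map_mul, mul_re, mul_im, conj_re, conj_im]
  ring

lemma norm_leaf_sq (m : ℕ) (a b t : ℂ) :
    ‖(a + b ^ m * t) * exp (m * t)‖ ^ 2 + ‖b * exp t‖ ^ 2 =
      Real.exp (2 * m * t.re) * (‖a‖ ^ 2 + (‖b‖ ^ m) ^ 2 * ‖t‖ ^ 2 +
        2 * ((a * conj b ^ m).re * t.re + (a * conj b ^ m).im * t.im)) +
      Real.exp (2 * t.re) * ‖b‖ ^ 2 := by
  have hexp (x : ℝ) : Real.exp x ^ 2 = Real.exp (2 * x) := by rw [← Real.exp_nat_mul]; norm_num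
  rw [norm_mul, norm_mul, mul_pow, mul_pow, norm_exp, norm_exp, hexp, hexp, norm_add_mul_sq,
    norm_pow, map_pow]
  have hre : ((m : ℂ) * t).re = m * t.re := by simp
  rw [hre, mul_assoc]
  ring

lemma one_lt_norm_leaf_sq {m : ℕ} (hm : 1 ≤ m) {a b t : ℂ} (hab : ‖a‖ ^ 2 + ‖b‖ ^ 2 = 1)
    (hb : b ≠ 0) (him : (a * conj b ^ m).im = 0) (ht : t ≠ 0) (hr : 0 ≤ t.re) :
    1 < ‖(a + b ^ m * t) * exp (m * t)‖ ^ 2 + ‖b * exp t‖ ^ 2 := by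
  have hρ : -(‖a‖ * ‖b‖ ^ m) ≤ (a * conj b ^ m).re := by
    have := abs_re_le_norm (a * conj b ^ m)
    rw [norm_mul, norm_pow, norm_conj] at this
    exact (abs_le.mp this).1
  have hβm : (‖b‖ ^ m) ^ 2 ≤ ‖b‖ ^ 2 := by
    rw [← pow_mul, mul_comm, pow_mul]
    exact pow_le_of_le_one (by positivity) (by nlinarith [sq_nonneg ‖a‖]) (by omega)
  have hrt : t.re ^ 2 ≤ ‖t‖ ^ 2 := by
    simpa only [sq_abs] using pow_le_pow_left₀ (abs_nonneg _) (abs_re_le_norm t) 2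
  rw [norm_leaf_sq, him, zero_mul, add_zero, ← hab]
  set A := ‖a‖
  set β := ‖b‖
  set ρ := (a * conj b ^ m).re
  set r := t.re
  rcases hr.eq_or_lt with hr0 | hrpos
  · have : 0 < (β ^ m) ^ 2 * ‖t‖ ^ 2 := by positivity
    rw [← hr0]
    simp only [mul_zero, Real.exp_zero, one_mul]
    linarith
  have hexp : Real.exp (2 * r) ≤ Real.exp (2 * m * r) := by
    gcongr
    nlinarith [(Nat.one_le_cast (α := ℝ)).mpr hm]
  have hinner : (A - β ^ m * r) ^ 2 ≤ A ^ 2 + (β ^ m) ^ 2 * ‖t‖ ^ 2 + 2 * (ρ * r) := by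
    nlinarith [mul_le_mul_of_nonneg_left hrt (sq_nonneg (β ^ m)), mul_le_mul_of_nonneg_right hρ hr]
  calc A ^ 2 + β ^ 2 = Real.exp (2 * 0) * ((A - β ^ m * 0) ^ 2 + β ^ 2) := by simp
    _ < Real.exp (2 * r) * ((A - β ^ m * r) ^ 2 + β ^ 2) :=
      strictMono_exp_two_mul_mul_sq_add_sq hβm (norm_ne_zero_iff.mpr hb) hrpos
    _ ≤ _ := by
      rw [mul_add]
      gcongr ?_ + _
      exact mul_le_mul hexp hinner (sq_nonneg _) (Real.exp_pos _).le

/-- For m ≥ 1 and (a,b) on the unit sphere of ℂ² with b ≠ 0,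
Im(a·(conj b)ᵐ) = 0 iff every nonzero parameter t of the intersection of the leaf
through (a,b) with the unit sphere has Re t < 0, i.e. (a,b) is the unique point of
maximal distance from {y = 0} on its leaf. -/
theorem stmt6 (m : ℕ) (hm : 1 ≤ m) (a b : ℂ)
    (hab : ‖a‖ ^ 2 + ‖b‖ ^ 2 = 1) (hb : b ≠ 0) :
    (a * (starRingEnd ℂ b) ^ m).im = 0 ↔
      ∀ t : ℂ, t ≠ 0 →
        ‖(a + b ^ m * t) * Complex.exp ((m : ℂ) * t)‖ ^ 2 +
            ‖b * Complex.exp t‖ ^ 2 = 1 →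
        t.re < 0 := by
  refine ⟨fun him t ht hsph => ?_, fun h => ?_⟩
  · by_contra! hr
    exact (one_lt_norm_leaf_sq hm hab hb him ht hr).ne' hsph
  · by_contra hc
    have hbm : (‖b‖ ^ m) ^ 2 ≠ 0 := by positivity
    set θ := -2 * (a * conj b ^ m).im / (‖b‖ ^ m) ^ 2
    have hθ : θ ≠ 0 := div_ne_zero (by simpa using hc) hbm
    have hre : ((θ : ℂ) * I).re = 0 := by simp
    have him : ((θ : ℂ) * I).im = θ := by simp
    have hnorm : ‖(θ : ℂ) * I‖ ^ 2 = θ ^ 2 := by simp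
    refine (h (θ * I) (by simpa using hθ) ?_).ne (by rw [hre])
    have hθ_root : (‖b‖ ^ m) ^ 2 * θ = -2 * (a * conj b ^ m).im := mul_div_cancel₀ _ hbm
    rw [norm_leaf_sq, hre, him, hnorm, ← hab]
    simp only [mul_zero, Real.exp_zero, one_mul]
    linear_combination θ * hθ_root
end

section
/- Let m ≥ 1 be an integer and let (x,y) ∈ ℂ² with 0 < |x|² + |y|² ≤ 1. Then conj(x)·(m·x + yᵐ) + conj(y)·y ≠ 0. (Geometrically: at every point of every sphere of radius ε with 0 < ε ≤ 1 centered at the origin of ℂ², the holomorphic vector field θ_m = (m·x + yᵐ) ∂/∂x + y ∂/∂y is not tangent to the sphere, i.e. the leaves of the foliation represented by θ_m intersect all these spheres transversally.) -/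
/-!
The real part of `conj x · (m x + yᵐ) + conj y · y` is `m‖x‖² + Re(conj x · yᵐ) + ‖y‖²`. On the unit
ball `‖yᵐ‖ ≤ ‖y‖`, so the middle term is at least `-‖x‖‖y‖`, and the real part is bounded below by
`‖x‖² - ‖x‖‖y‖ + ‖y‖²`, a positive definite quadratic form.
-/

open ComplexConjugate

lemma sq_sub_mul_add_sq_pos {a b : ℝ} (h : 0 < a ^ 2 + b ^ 2) : 0 < a ^ 2 - a * b + b ^ 2 := by
  nlinarith [sq_nonneg (a - b)]

namespace Complex

lemma neg_norm_mul_le_re_conj_mul (x w : ℂ) : -(‖x‖ * ‖w‖) ≤ (conj x * w).re := by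
  simpa [norm_mul] using neg_le_of_abs_le (abs_re_le_norm (conj x * w))

lemma re_conj_mul_ofReal_mul_add (c : ℝ) (x w : ℂ) :
    (conj x * (c * x + w)).re = c * ‖x‖ ^ 2 + (conj x * w).re := by
  rw [mul_add, mul_left_comm, conj_mul', add_re, ← ofReal_pow, ← ofReal_mul, ofReal_re]

lemma re_conj_mul_ofReal_mul_add_add_conj_mul_self_pos {c : ℝ} (hc : 1 ≤ c) {x y w : ℂ}
    (hw : ‖w‖ ≤ ‖y‖) (h : 0 < ‖x‖ ^ 2 + ‖y‖ ^ 2) :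
    0 < (conj x * (c * x + w) + conj y * y).re := by
  have hxw : -(‖x‖ * ‖y‖) ≤ (conj x * w).re :=
    (neg_le_neg (mul_le_mul_of_nonneg_left hw (norm_nonneg x))).trans
      (neg_norm_mul_le_re_conj_mul x w)
  rw [add_re, re_conj_mul_ofReal_mul_add, conj_mul', ← ofReal_pow, ofReal_re]
  nlinarith [sq_sub_mul_add_sq_pos h, sq_nonneg ‖x‖]

end Complex

/-- For m ≥ 1 and (x,y) ∈ ℂ² with 0 < |x|² + |y|² ≤ 1 one has
conj(x)·(mx + yᵐ) + conj(y)·y ≠ 0; i.e. the vector field (mx + yᵐ)∂/∂x + y∂/∂y is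
nowhere tangent to the spheres of radius ε, 0 < ε ≤ 1, so its leaves intersect all
these spheres transversally. -/
theorem stmt7 (m : ℕ) (hm : 1 ≤ m) (x y : ℂ)
    (h0 : 0 < ‖x‖ ^ 2 + ‖y‖ ^ 2)
    (h1 : ‖x‖ ^ 2 + ‖y‖ ^ 2 ≤ 1) :
    (starRingEnd ℂ x) * ((m : ℂ) * x + y ^ m) + (starRingEnd ℂ y) * y ≠ 0 := by
  have hy : ‖y‖ ≤ 1 := by nlinarith [sq_nonneg ‖x‖, norm_nonneg y]
  have hym : ‖y ^ m‖ ≤ ‖y‖ := by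
    rw [norm_pow]
    exact pow_le_of_le_one (norm_nonneg y) hy (Nat.one_le_iff_ne_zero.mp hm)
  have hpos := Complex.re_conj_mul_ofReal_mul_add_add_conj_mul_self_pos (c := m)
    (by exact_mod_cast hm) hym h0
  rw [Complex.ofReal_natCast] at hpos
  intro h
  rw [h, Complex.zero_re] at hpos
  exact hpos.false
end

section
/- Let m ≥ 1 be an integer and let a, b ∈ ℂ with |a|² + |b|² = 1. Then the function g : ℝ → ℝ defined by g(t) = |a|² + 2·Re(bᵐ·conj(a))·t + |b|^(2m)·t² + |b|²·exp(2(1−m)·t) − exp(−2m·t) is strictly monotonically increasing on the interval (−∞, 0]. -/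
/-!
Write `A = ‖a‖²`, `D = ‖b‖² = 1 - A`, `C = ‖b‖^(2m)` and `B = 2 Re(bᵐ ā)`, so that
`B ≥ -(A + C)` by `0 ≤ ‖bᵐ + a‖²`. For `t = -s < 0` put `E = exp(2(m-1)s) ≥ 1`; then
`g'(t) = B - 2Cs - 2(m-1)DE + 2mE·exp(2s)` and `exp(2s) ≥ 1 + 2s` give
`g'(t) ≥ (1 - C) + D + 2s(2m - C) > 0`.
-/

open Real Set

noncomputable def sphereConstTerm (A B C D μ t : ℝ) : ℝ :=
  A + B * t + C * t ^ 2 + D * exp (2 * (1 - μ) * t) - exp (-(2 * μ) * t)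

lemma hasDerivAt_sphereConstTerm (A B C D μ t : ℝ) :
    HasDerivAt (sphereConstTerm A B C D μ)
      (B + C * (2 * t) + D * (2 * (1 - μ) * exp (2 * (1 - μ) * t)) +
        2 * μ * exp (-(2 * μ) * t)) t := by
  have hlin : HasDerivAt (fun x : ℝ => B * x) B t := by
    simpa using (hasDerivAt_id t).const_mul B
  have hsq : HasDerivAt (fun x : ℝ => x ^ 2) (2 * t) t := by
    simpa using hasDerivAt_pow 2 t
  have hexp (k : ℝ) : HasDerivAt (fun x : ℝ => exp (k * x)) (k * exp (k * t)) t := by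
    simpa [mul_comm] using ((hasDerivAt_id t).const_mul k).exp
  exact (((((hasDerivAt_const t A).add hlin).add (hsq.const_mul C)).add
    ((hexp (2 * (1 - μ))).const_mul D)).sub (hexp (-(2 * μ)))).congr_deriv (by ring)

lemma sphereConstTerm_deriv_pos {A B C D μ t : ℝ} (hA : 0 ≤ A) (hD : 0 ≤ D) (hAD : A + D = 1)
    (hC : C ≤ 1) (hB : -(A + C) ≤ B) (hμ : 1 ≤ μ) (ht : t < 0) :
    0 < B + C * (2 * t) + D * (2 * (1 - μ) * exp (2 * (1 - μ) * t)) +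
      2 * μ * exp (-(2 * μ) * t) := by
  set E := exp (2 * (1 - μ) * t)
  have hE : 1 ≤ E := one_le_exp (by nlinarith)
  have hexp_split : exp (-(2 * μ) * t) = E * exp (-2 * t) := by
    rw [← exp_add]; congr 1; ring
  have hexp_tangent : 1 - 2 * t ≤ exp (-2 * t) := by
    linarith [add_one_le_exp (-2 * t)]
  have hDE : D * ((μ - 1) * E) ≤ (μ - 1) * E :=
    mul_le_of_le_one_left (by nlinarith) (by linarith)
  have hEexp : μ * (E * (1 - 2 * t)) ≤ μ * (E * exp (-2 * t)) := by
    gcongr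
  rw [hexp_split]
  nlinarith [mul_pos_of_neg_of_neg ht (by linarith : C - 2 * μ < 0),
    mul_nonneg (mul_nonneg (sub_nonneg.2 hE) (neg_nonneg.2 ht.le)) (zero_le_one.trans hμ)]

theorem strictMonoOn_sphereConstTerm {A B C D μ : ℝ} (hA : 0 ≤ A) (hD : 0 ≤ D)
    (hAD : A + D = 1) (hC : C ≤ 1) (hB : -(A + C) ≤ B) (hμ : 1 ≤ μ) :
    StrictMonoOn (sphereConstTerm A B C D μ) (Iic 0) := by
  apply strictMonoOn_of_deriv_pos (convex_Iic 0)
    (fun t _ => (hasDerivAt_sphereConstTerm A B C D μ t).continuousAt.continuousWithinAt)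
  intro t ht
  rw [interior_Iic] at ht
  rw [(hasDerivAt_sphereConstTerm A B C D μ t).deriv]
  exact sphereConstTerm_deriv_pos hA hD hAD hC hB hμ ht

lemma neg_le_two_mul_re_mul_conj (z w : ℂ) :
    -(‖w‖ ^ 2 + ‖z‖ ^ 2) ≤ 2 * (z * starRingEnd ℂ w).re := by
  have h := Complex.normSq_add z w
  simp only [Complex.normSq_eq_norm_sq] at h
  nlinarith [Complex.normSq_nonneg (z + w)]

/-- For m ≥ 1 and (a,b) on the unit sphere of ℂ², the constant term
g(t) = |a|² + 2Re(bᵐ·conj a)·t + |b|^{2m}·t² + |b|²·e^{2(1−m)t} − e^{−2mt}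
of the equation (∗) is strictly monotonically increasing on (−∞, 0]. -/
theorem stmt8 (m : ℕ) (hm : 1 ≤ m) (a b : ℂ)
    (hab : ‖a‖ ^ 2 + ‖b‖ ^ 2 = 1) :
    StrictMonoOn (fun t : ℝ =>
        ‖a‖ ^ 2 + 2 * (b ^ m * starRingEnd ℂ a).re * t +
          ‖b‖ ^ (2 * m) * t ^ 2 +
          ‖b‖ ^ 2 * Real.exp (2 * (1 - (m : ℝ)) * t) -
          Real.exp (-(2 * (m : ℝ)) * t))
      (Set.Iic 0) := by
  have hb : ‖b‖ ≤ 1 := by nlinarith [sq_nonneg ‖a‖, norm_nonneg b]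
  have hC : ‖b‖ ^ (2 * m) ≤ 1 := pow_le_one₀ (norm_nonneg b) hb
  have hB : -(‖a‖ ^ 2 + ‖b‖ ^ (2 * m)) ≤ 2 * (b ^ m * starRingEnd ℂ a).re := by
    simpa [norm_pow, ← pow_mul, mul_comm] using neg_le_two_mul_re_mul_conj (b ^ m) a
  exact strictMonoOn_sphereConstTerm (by positivity) (by positivity) hab hC hB
    (by exact_mod_cast hm)
end

section
/- Let λ ∈ ℂ with λ ∉ ℝ, let I ⊆ ℝ be an interval, and let γ = (γ₁, γ₂) : I → ℂ² be a continuously differentiable curve such that for all s ∈ I: |γ₁(s)|² + |γ₂(s)|² = 1, γ₁(s) ≠ 0, γ₂(s) ≠ 0, γ′(s) ≠ 0, and there exists c ∈ ℂ with γ′(s) = c·(λ·γ₁(s), γ₂(s)) (i.e. γ is a regular curve on the unit sphere everywhere tangent to the foliation given by λx ∂/∂x + y ∂/∂y). Then the function s ↦ |γ₁(s)| is strictly monotone on I. (Hence along any leaf of the intersection foliation of F_λ with S³ avoiding the coordinate axes, the absolute value of the x-coordinate strictly increases or strictly decreases, so such a leaf meets each torus T^x_{ε_x} at most once.) -/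
open Complex Filter Topology
open scoped InnerProductSpace

/-!
Put `F = |γ₁|²` and write `γ' = c (λγ₁, γ₂)`. Then `F' = 2 Re(cλ) |γ₁|²`, while differentiating
`|γ₁|² + |γ₂|² = 1` gives `Re(cλ) |γ₁|² + Re(c) |γ₂|² = 0`. If `F'` vanished, both `Re(cλ)` and
`Re c` would vanish, which forces `c = 0` as `λ ∉ ℝ`, contradicting regularity. So `F'` never
vanishes in the interior of `I`, hence has constant sign by Darboux's theorem, and `F` is strictly
monotone.
-/

theorem strictMonoOn_or_strictAntiOn_of_hasDerivAt_ne_zero {I : Set ℝ} (hI : Convex ℝ I)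
    {f f' : ℝ → ℝ} (hf : ContinuousOn f I) (hf' : ∀ x ∈ interior I, HasDerivAt f (f' x) x)
    (hf'₀ : ∀ x ∈ interior I, f' x ≠ 0) : StrictMonoOn f I ∨ StrictAntiOn f I := by
  have hderiv : ∀ x ∈ interior I, HasDerivWithinAt f (f' x) (interior I) x :=
    fun x hx => (hf' x hx).hasDerivWithinAt
  rcases hasDerivWithinAt_forall_lt_or_forall_gt_of_forall_ne hI.interior hderiv hf'₀ with
    hneg | hpos
  · exact Or.inr (strictAntiOn_of_hasDerivWithinAt_neg hI hf hderiv hneg)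
  · exact Or.inl (strictMonoOn_of_hasDerivWithinAt_pos hI hf hderiv hpos)

theorem inner_fst_add_inner_snd_eq_zero_of_eventually_eq {E F : Type*}
    [NormedAddCommGroup E] [InnerProductSpace ℝ E] [NormedAddCommGroup F] [InnerProductSpace ℝ F]
    {γ : ℝ → E × F} {v : E × F} {s r : ℝ} (hγ : HasDerivAt γ v s)
    (hr : ∀ᶠ t in 𝓝 s, ‖(γ t).1‖ ^ 2 + ‖(γ t).2‖ ^ 2 = r) :
    ⟪(γ s).1, v.1⟫_ℝ + ⟪(γ s).2, v.2⟫_ℝ = 0 := by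
  have hsum := (hasFDerivAt_fst.comp_hasDerivAt s hγ).norm_sq.add
    (hasFDerivAt_snd.comp_hasDerivAt s hγ).norm_sq
  have := (hsum.congr_of_eventuallyEq (EventuallyEq.symm hr)).unique (hasDerivAt_const s r)
  simp only [Function.comp_apply, ContinuousLinearMap.coe_fst', ContinuousLinearMap.coe_snd']
    at this
  linarith

theorem Complex.inner_mul_self_right (z w : ℂ) : ⟪z, w * z⟫_ℝ = w.re * ‖z‖ ^ 2 := by
  rw [Complex.inner, mul_assoc, mul_conj, normSq_eq_norm_sq, re_mul_ofReal]

theorem Complex.eq_zero_of_re_mul_eq_zero {c lam : ℂ} (hlam : lam.im ≠ 0)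
    (hmul : (c * lam).re = 0) (hc : c.re = 0) : c = 0 := by
  have him : c.im = 0 := by
    simpa [mul_re, hc, hlam] using hmul
  exact Complex.ext hc him

theorem Complex.inner_ne_zero_of_tangent {lam x y c : ℂ} (hlam : lam.im ≠ 0) (hx : x ≠ 0)
    (hy : y ≠ 0) (hc : c ≠ 0) (horth : ⟪x, c * (lam * x)⟫_ℝ + ⟪y, c * y⟫_ℝ = 0) :
    ⟪x, c * (lam * x)⟫_ℝ ≠ 0 := by
  rw [← mul_assoc, inner_mul_self_right] at horth ⊢
  rw [inner_mul_self_right] at horth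
  intro hzero
  have hmul : (c * lam).re = 0 :=
    (mul_eq_zero.1 hzero).resolve_right (pow_ne_zero 2 (norm_ne_zero_iff.2 hx))
  rw [hzero, zero_add] at horth
  have hre : c.re = 0 :=
    (mul_eq_zero.1 horth).resolve_right (pow_ne_zero 2 (norm_ne_zero_iff.2 hy))
  exact hc (eq_zero_of_re_mul_eq_zero hlam hmul hre)

theorem stmt11_general (lam : ℂ) (hlam : lam.im ≠ 0) (I : Set ℝ) (hI : I.OrdConnected)
    (γ : ℝ → ℂ × ℂ) (γ' : ℝ → ℂ × ℂ)
    (hderiv : ∀ s ∈ I, HasDerivAt γ (γ' s) s)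
    (hsphere : ∀ s ∈ I, ‖(γ s).1‖ ^ 2 + ‖(γ s).2‖ ^ 2 = 1)
    (hx : ∀ s ∈ I, (γ s).1 ≠ 0)
    (hy : ∀ s ∈ I, (γ s).2 ≠ 0)
    (hreg : ∀ s ∈ I, γ' s ≠ 0)
    (htang : ∀ s ∈ I, ∃ c : ℂ, γ' s = (c * (lam * (γ s).1), c * (γ s).2)) :
    StrictMonoOn (fun s => ‖(γ s).1‖) I ∨
      StrictAntiOn (fun s => ‖(γ s).1‖) I := by
  have hF : ∀ s ∈ I, HasDerivAt (fun t => ‖(γ t).1‖ ^ 2) (2 * ⟪(γ s).1, (γ' s).1⟫_ℝ) s :=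
    fun s hs => (hasFDerivAt_fst.comp_hasDerivAt s (hderiv s hs)).norm_sq
  have hF'₀ : ∀ s ∈ interior I, 2 * ⟪(γ s).1, (γ' s).1⟫_ℝ ≠ 0 := by
    intro s hs
    have hsI := interior_subset hs
    obtain ⟨c, hc⟩ := htang s hsI
    have hc₀ : c ≠ 0 := by
      rintro rfl
      exact hreg s hsI (by simp [hc])
    have horth := inner_fst_add_inner_snd_eq_zero_of_eventually_eq (hderiv s hsI)
      (eventually_of_mem (mem_interior_iff_mem_nhds.1 hs) hsphere)
    rw [hc] at horth ⊢
    exact mul_ne_zero two_ne_zero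
      (inner_ne_zero_of_tangent hlam (hx s hsI) (hy s hsI) hc₀ horth)
  refine (strictMonoOn_or_strictAntiOn_of_hasDerivAt_ne_zero hI.convex
    (fun s hs => (hF s hs).continuousAt.continuousWithinAt)
    (fun s hs => hF s (interior_subset hs)) hF'₀).imp ?_ ?_
  · exact fun h a ha b hb hab => lt_of_pow_lt_pow_left₀ 2 (norm_nonneg _) (h ha hb hab)
  · exact fun h a ha b hb hab => lt_of_pow_lt_pow_left₀ 2 (norm_nonneg _) (h ha hb hab)

/-- For λ ∉ ℝ, a regular C¹ curve γ on the unit sphere of ℂ², avoiding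
the coordinate axes and everywhere tangent to the foliation given by λx ∂/∂x + y ∂/∂y,
has strictly monotone |γ₁|; hence a leaf of the intersection foliation avoiding the
axes meets each torus T^x_{ε_x} at most once. -/
theorem stmt11 (lam : ℂ) (hlam : lam.im ≠ 0) (I : Set ℝ) (hI : I.OrdConnected)
    (γ : ℝ → ℂ × ℂ) (γ' : ℝ → ℂ × ℂ)
    (hderiv : ∀ s ∈ I, HasDerivAt γ (γ' s) s)
    (hcont : ContinuousOn γ' I)
    (hsphere : ∀ s ∈ I, ‖(γ s).1‖ ^ 2 + ‖(γ s).2‖ ^ 2 = 1)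
    (hx : ∀ s ∈ I, (γ s).1 ≠ 0)
    (hy : ∀ s ∈ I, (γ s).2 ≠ 0)
    (hreg : ∀ s ∈ I, γ' s ≠ 0)
    (htang : ∀ s ∈ I, ∃ c : ℂ, γ' s = (c * (lam * (γ s).1), c * (γ s).2)) :
    StrictMonoOn (fun s => ‖(γ s).1‖) I ∨
      StrictAntiOn (fun s => ‖(γ s).1‖) I :=
  stmt11_general lam hlam I hI γ γ' hderiv hsphere hx hy hreg htang
end

section
/- Let n ≥ 1 and let λ₁, …, λₙ ∈ ℂ be such that 0 does not belong to the convex hull in ℂ of {λ₁, …, λₙ}. Then the set of resonances of (λ₁,…,λₙ) is finite; that is, the set {(i, m) : i ∈ {1,…,n}, m = (m₁,…,mₙ) ∈ ℕⁿ, λᵢ = ∑ⱼ mⱼ·λⱼ} is a finite set. -/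
/-!
Separate `0` from the convex hull of the `λⱼ` by a real linear functional `f`, so that
`c ≤ f λⱼ ≤ M` for some `c > 0`. Applying `f` to a resonance `λᵢ = ∑ⱼ mⱼ λⱼ` gives
`c ∑ⱼ mⱼ ≤ M`, which leaves only finitely many `m`.
-/

open Finset

variable {ι E : Type*}

def resonances [Fintype ι] [AddCommMonoid E] (v : ι → E) : Set (ι × (ι → ℕ)) :=
  {p | v p.1 = ∑ j, p.2 j • v j}

theorem exists_forall_pos_lt_of_zero_notMem_convexHull [AddCommGroup E] [Module ℝ E]
    [TopologicalSpace E] [IsTopologicalAddGroup E] [ContinuousSMul ℝ E]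
    [LocallyConvexSpace ℝ E] [T2Space E] {s : Set E} (hs : s.Finite)
    (h : (0 : E) ∉ convexHull ℝ s) : ∃ f : E →L[ℝ] ℝ, ∃ c > 0, ∀ x ∈ s, c < f x := by
  obtain ⟨f, c, hf0, hfs⟩ := geometric_hahn_banach_point_closed (convex_convexHull ℝ s)
    (hs.isClosed_convexHull (𝕜 := ℝ)) h
  exact ⟨f, c, by simpa using hf0, fun x hx ↦ hfs x (subset_convexHull ℝ s hx)⟩

section Resonances

variable [Fintype ι] [AddCommMonoid E]

theorem mul_sum_le_of_mem_resonances (f : E →+ ℝ) {v : ι → E} {c : ℝ}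
    (hv : ∀ j, c ≤ f (v j)) {p : ι × (ι → ℕ)} (hp : p ∈ resonances v) :
    c * ∑ j, (p.2 j : ℝ) ≤ f (v p.1) :=
  calc c * ∑ j, (p.2 j : ℝ) = ∑ j, (p.2 j : ℝ) * c := by rw [mul_sum]; simp only [mul_comm]
    _ ≤ ∑ j, (p.2 j : ℝ) * f (v j) :=
      sum_le_sum fun j _ ↦ mul_le_mul_of_nonneg_left (hv j) (Nat.cast_nonneg _)
    _ = f (v p.1) := by rw [hp, map_sum]; simp only [map_nsmul, nsmul_eq_mul]

theorem finite_resonances_of_pos_le (f : E →+ ℝ) {v : ι → E} {c : ℝ} (hc : 0 < c)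
    (hv : ∀ j, c ≤ f (v j)) : (resonances v).Finite := by
  classical
  obtain ⟨M, hM⟩ := (Set.finite_range (f ∘ v)).bddAbove
  apply (Set.finite_univ.prod (Set.finite_Iic fun _ ↦ ⌈M / c⌉₊)).subset
  intro p hp
  refine ⟨trivial, fun j ↦ ?_⟩
  have hsum : ∑ k, (p.2 k : ℝ) ≤ M / c := by
    rw [le_div_iff₀' hc]
    exact (mul_sum_le_of_mem_resonances f hv hp).trans (hM ⟨p.1, rfl⟩)
  have hj : (p.2 j : ℝ) ≤ ∑ k, (p.2 k : ℝ) :=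
    single_le_sum (fun k _ ↦ Nat.cast_nonneg (p.2 k)) (mem_univ j)
  exact_mod_cast (hj.trans hsum).trans (Nat.le_ceil _)

end Resonances

theorem finite_resonances_of_zero_notMem_convexHull [Fintype ι] [AddCommGroup E] [Module ℝ E]
    [TopologicalSpace E] [IsTopologicalAddGroup E] [ContinuousSMul ℝ E]
    [LocallyConvexSpace ℝ E] [T2Space E] {v : ι → E}
    (h : (0 : E) ∉ convexHull ℝ (Set.range v)) : (resonances v).Finite := by
  obtain ⟨f, c, hc, hf⟩ :=
    exists_forall_pos_lt_of_zero_notMem_convexHull (Set.finite_range v) h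
  exact finite_resonances_of_pos_le f.toLinearMap.toAddMonoidHom hc
    fun j ↦ (hf _ ⟨j, rfl⟩).le

theorem stmt17_general (n : ℕ) (lam : Fin n → ℂ)
    (h : (0 : ℂ) ∉ convexHull ℝ (Set.range lam)) :
    {p : Fin n × (Fin n → ℕ) | lam p.1 = ∑ j, (p.2 j : ℂ) * lam j}.Finite := by
  simpa only [resonances, nsmul_eq_mul] using finite_resonances_of_zero_notMem_convexHull h

/-- If 0 is not in the convex hull of {λ₁,…,λₙ} ⊆ ℂ (Poincaré domain),
then there are only finitely many resonances λᵢ = ∑ⱼ mⱼλⱼ with m ∈ ℕⁿ. -/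
theorem stmt17 (n : ℕ) (hn : 1 ≤ n) (lam : Fin n → ℂ)
    (h : (0 : ℂ) ∉ convexHull ℝ (Set.range lam)) :
    {p : Fin n × (Fin n → ℕ) | lam p.1 = ∑ j, (p.2 j : ℂ) * lam j}.Finite :=
  stmt17_general n lam h
end
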